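/- arXiv:2507.09434 — 11 statements merged into one kernel-verified Lean document; each statement's English description precedes it below -/
import Mathlib

section
/- Let T(n) denote the maximum number of cyclic triangles in an n-vertex tournament, given by T(n) = n(n^2-1)/24 if n is odd and T(n) = n(n^2-4)/24 if n is even. Then in any tournament on n vertices, the number of cyclic triangles is at most T(n). -/
open Finset

namespace TournAux

lemma two_mul_choose_two (d : ℕ) : 2 * d.choose 2 + d = d * d := by
  induction d with
  | zero => rfl
  | succ k ih =>
    rw [Nat.choose_succ_succ, Nat.choose_one_right]
    have hatom : k.choose (Nat.succ 1) = k.choose 2 := rfl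
    rw [hatom]
    have hexp : (k+1) * (k+1) = k*k + 2*k + 1 := by ring
    omega

lemma six_choose_three_aux : ∀ m : ℕ, 6 * (m+2).choose 3 = (m+2) * (m+1) * m := by
  intro m
  induction m with
  | zero => rfl
  | succ k ih =>
    rw [Nat.choose_succ_succ (k+2) 2]
    have hatom : (k+2).choose (Nat.succ 2) = (k+2).choose 3 := rfl
    rw [hatom]
    have h2 : 2 * (k+2).choose 2 + (k+2) = (k+2) * (k+2) := two_mul_choose_two (k+2)
    have ha : (k+2) * (k+1) * k = k*k*k + 3*(k*k) + 2*k := by ring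
    have hb : (k+1+2) * (k+1+1) * (k+1) = k*k*k + 6*(k*k) + 11*k + 6 := by ring
    have hc : (k+2) * (k+2) = k*k + 4*k + 4 := by ring
    omega

lemma six_choose_three (n : ℕ) : 6 * n.choose 3 = n * (n - 1) * (n - 2) := by
  match n with
  | 0 => rfl
  | 1 => rfl
  | (m+2) => simpa using six_choose_three_aux m

variable {n : ℕ} (o : Fin n → Fin n → Bool)

def outN (v : Fin n) : Finset (Fin n) := Finset.univ.filter (fun w => o v w = true)

def dd (v : Fin n) : ℕ := (outN o v).card

def isCyc (s : Finset (Fin n)) : Prop :=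
  ∃ x y z : Fin n, o x y = true ∧ o y z = true ∧ o z x = true ∧ s = {x, y, z}

instance : DecidablePred (isCyc o) := fun s => by unfold isCyc; infer_instance

def pred (s : Finset (Fin n)) (v : Fin n) : Prop := ∀ w ∈ s, w ≠ v → o v w = true

instance (s : Finset (Fin n)) : DecidablePred (pred o s) := fun v => by
  unfold pred; infer_instance

def P3 (n : ℕ) : Finset (Finset (Fin n)) := Finset.powersetCard 3 Finset.univ

variable (hirr : ∀ i, o i i = false)
    (hasym : ∀ i j : Fin n, i ≠ j → o i j = !o j i)

include hirr in
theorem isCyc_iff {a b c : Fin n} (hab : a ≠ b) (hac : a ≠ c) (hbc : b ≠ c) :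
    isCyc o ({a, b, c} : Finset (Fin n)) ↔
      (o a b = true ∧ o b c = true ∧ o c a = true) ∨
      (o b a = true ∧ o c b = true ∧ o a c = true) := by
  constructor
  · rintro ⟨x, y, z, h1, h2, h3, hs⟩
    have hx : x ∈ ({a, b, c} : Finset (Fin n)) := by rw [hs]; simp
    have hy : y ∈ ({a, b, c} : Finset (Fin n)) := by rw [hs]; simp
    have hz : z ∈ ({a, b, c} : Finset (Fin n)) := by rw [hs]; simp
    simp only [mem_insert, mem_singleton] at hx hy hz
    rcases hx with rfl | rfl | rfl <;> rcases hy with rfl | rfl | rfl <;>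
      rcases hz with rfl | rfl | rfl <;> simp_all [hirr]
  · rintro (⟨h1, h2, h3⟩ | ⟨h1, h2, h3⟩)
    · exact ⟨a, b, c, h1, h2, h3, rfl⟩
    · refine ⟨b, a, c, h1, h3, h2, ?_⟩
      ext w; simp; tauto

include hirr in
theorem cyc_mem_P3 {s : Finset (Fin n)} (h : isCyc o s) : s ∈ P3 n := by
  obtain ⟨x, y, z, h1, h2, h3, rfl⟩ := h
  have hxy : x ≠ y := by rintro rfl; simp [hirr] at h1
  have hyz : y ≠ z := by rintro rfl; simp [hirr] at h2
  have hzx : z ≠ x := by rintro rfl; simp [hirr] at h3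
  rw [P3, Finset.mem_powersetCard]
  refine ⟨Finset.subset_univ _, ?_⟩
  rw [Finset.card_insert_of_notMem (by simp [hxy, hzx.symm]),
    Finset.card_insert_of_notMem (by simp [hyz]), Finset.card_singleton]

include hirr hasym in
theorem domCount (s : Finset (Fin n)) (hs : s ∈ P3 n) :
    (s.filter (pred o s)).card + (if isCyc o s then 1 else 0) = 1 := by
  rw [P3, Finset.mem_powersetCard] at hs
  obtain ⟨a, b, c, hab, hac, hbc, rfl⟩ := Finset.card_eq_three.mp hs.2
  have ha : pred o {a, b, c} a ↔ (o a b = true ∧ o a c = true) := by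
    constructor
    · intro h; exact ⟨h b (by simp) (Ne.symm hab), h c (by simp) (Ne.symm hac)⟩
    · rintro ⟨h1, h2⟩ w hw hwa
      simp only [mem_insert, mem_singleton] at hw
      rcases hw with rfl | rfl | rfl
      · exact absurd rfl hwa
      · exact h1
      · exact h2
  have hb : pred o {a, b, c} b ↔ (o b a = true ∧ o b c = true) := by
    constructor
    · intro h; exact ⟨h a (by simp) hab, h c (by simp) (Ne.symm hbc)⟩
    · rintro ⟨h1, h2⟩ w hw hwb
      simp only [mem_insert, mem_singleton] at hw
      rcases hw with rfl | rfl | rfl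
      · exact h1
      · exact absurd rfl hwb
      · exact h2
  have hc : pred o {a, b, c} c ↔ (o c a = true ∧ o c b = true) := by
    constructor
    · intro h; exact ⟨h a (by simp) hac, h b (by simp) hbc⟩
    · rintro ⟨h1, h2⟩ w hw hwc
      simp only [mem_insert, mem_singleton] at hw
      rcases hw with rfl | rfl | rfl
      · exact h1
      · exact h2
      · exact absurd rfl hwc
  rw [Finset.card_filter, Finset.sum_insert (by simp [hab, hac]),
    Finset.sum_insert (by simp [hbc]), Finset.sum_singleton]
  have e1 : o b a = !o a b := hasym b a (Ne.symm hab)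
  have e2 : o c a = !o a c := hasym c a (Ne.symm hac)
  have e3 : o c b = !o b c := hasym c b (Ne.symm hbc)
  rcases Bool.eq_false_or_eq_true (o a b) with h1 | h1 <;>
    rcases Bool.eq_false_or_eq_true (o b c) with h2 | h2 <;>
    rcases Bool.eq_false_or_eq_true (o a c) with h3 | h3 <;>
    simp [ha, hb, hc, h1, h2, h3, e1, e2, e3, isCyc_iff o hirr hab hac hbc]

include hirr in
theorem vert_count (v : Fin n) :
    ((P3 n).filter (fun s => v ∈ s ∧ pred o s v)).card = (dd o v).choose 2 := by
  rw [dd, ← Finset.card_powersetCard]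
  refine Finset.card_bij' (fun s _ => s.erase v) (fun t _ => insert v t) ?_ ?_ ?_ ?_
  · intro s hs
    simp only [mem_filter, P3, Finset.mem_powersetCard] at hs
    obtain ⟨⟨hsub, hcard⟩, hv, hp⟩ := hs
    rw [Finset.mem_powersetCard]
    constructor
    · intro w hw
      rw [Finset.mem_erase] at hw
      rw [outN, mem_filter]
      exact ⟨Finset.mem_univ _, hp w hw.2 hw.1⟩
    · rw [Finset.card_erase_of_mem hv, hcard]
  · intro t ht
    rw [Finset.mem_powersetCard] at ht
    obtain ⟨hsub, hcard⟩ := ht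
    have hvt : v ∉ t := by
      intro hv
      have := hsub hv
      rw [outN, mem_filter] at this
      rw [hirr v] at this
      simp at this
    simp only [mem_filter, P3, Finset.mem_powersetCard]
    refine ⟨⟨Finset.subset_univ _, ?_⟩, Finset.mem_insert_self _ _, ?_⟩
    · rw [Finset.card_insert_of_notMem hvt, hcard]
    · intro w hw hwv
      rcases Finset.mem_insert.mp hw with rfl | hw2
      · exact absurd rfl hwv
      · have := hsub hw2
        rw [outN, mem_filter] at this
        exact this.2
  · intro s hs
    simp only [mem_filter] at hs
    exact Finset.insert_erase hs.2.1
  · intro t ht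
    rw [Finset.mem_powersetCard] at ht
    have hvt : v ∉ t := by
      intro hv
      have := ht.1 hv
      rw [outN, mem_filter] at this
      rw [hirr v] at this
      simp at this
    exact Finset.erase_insert hvt

include hirr in
theorem count_dom :
    ∑ s ∈ P3 n, (s.filter (pred o s)).card = ∑ v : Fin n, (dd o v).choose 2 := by
  have step1 : ∀ s ∈ P3 n, (s.filter (pred o s)).card
      = ∑ v : Fin n, if v ∈ s ∧ pred o s v then 1 else 0 := by
    intro s _
    have hf : s.filter (pred o s) = Finset.univ.filter (fun v => v ∈ s ∧ pred o s v) := by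
      ext v; simp
    rw [hf, Finset.card_filter]
  rw [Finset.sum_congr rfl step1, Finset.sum_comm]
  refine Finset.sum_congr rfl (fun v _ => ?_)
  rw [← vert_count o hirr v, Finset.card_filter]

include hirr hasym in
theorem key_identity :
    (Finset.univ.filter (isCyc o)).card + ∑ v : Fin n, (dd o v).choose 2 = n.choose 3 := by
  have hPC : Finset.univ.filter (isCyc o) = (P3 n).filter (isCyc o) := by
    ext s
    simp only [mem_filter, Finset.mem_univ, true_and]
    exact ⟨fun h => ⟨cyc_mem_P3 o hirr h, h⟩, fun h => h.2⟩
  have hsum : ∑ s ∈ P3 n, ((s.filter (pred o s)).card + (if isCyc o s then 1 else 0))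
      = (P3 n).card := by
    rw [Finset.sum_congr rfl (fun s hs => domCount o hirr hasym s hs)]
    simp
  rw [Finset.sum_add_distrib, count_dom o hirr, ← Finset.card_filter] at hsum
  have heta : (P3 n).filter (fun i => isCyc o i) = (P3 n).filter (isCyc o) := rfl
  rw [heta] at hsum
  have hP3card : (P3 n).card = n.choose 3 := by
    rw [P3, Finset.card_powersetCard, Finset.card_univ, Fintype.card_fin]
  rw [hPC]
  omega

include hirr hasym in
theorem sum_dd : 2 * ∑ v : Fin n, dd o v = n * (n - 1) := by
  set inN : Fin n → Finset (Fin n) := fun v => Finset.univ.filter (fun w => o w v = true) with hin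
  have hswap : ∑ v : Fin n, dd o v = ∑ v : Fin n, (inN v).card := by
    simp only [dd, outN, hin, Finset.card_filter]
    exact Finset.sum_comm
  have hsplit : ∀ v : Fin n, dd o v + (inN v).card = n - 1 := by
    intro v
    have hdisj : Disjoint (outN o v) (inN v) := by
      rw [Finset.disjoint_left]
      intro w hw1 hw2
      simp only [outN, mem_filter, Finset.mem_univ, true_and] at hw1
      simp only [inN, mem_filter, Finset.mem_univ, true_and] at hw2
      have hne : w ≠ v := by rintro rfl; simp [hirr w] at hw1
      rw [hasym v w hne.symm, hw2] at hw1
      simp at hw1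
    have hunion : outN o v ∪ inN v = Finset.univ.erase v := by
      ext w
      simp only [Finset.mem_union, outN, inN, mem_filter, Finset.mem_erase, Finset.mem_univ,
        true_and, and_true]
      constructor
      · rintro (h | h)
        · rintro rfl; simp [hirr w] at h
        · rintro rfl; simp [hirr w] at h
      · intro hne
        rcases Bool.eq_false_or_eq_true (o v w) with h | h
        · left; exact h
        · right
          rw [hasym w v hne, h]
          simp
    have := Finset.card_union_of_disjoint hdisj
    rw [hunion, Finset.card_erase_of_mem (Finset.mem_univ v), Finset.card_univ,
      Fintype.card_fin] at this
    rw [dd, ← this]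
  calc 2 * ∑ v : Fin n, dd o v = ∑ v : Fin n, dd o v + ∑ v : Fin n, (inN v).card := by
        rw [← hswap]; ring
    _ = ∑ v : Fin n, (dd o v + (inN v).card) := by rw [Finset.sum_add_distrib]
    _ = ∑ _v : Fin n, (n - 1) := Finset.sum_congr rfl (fun v _ => hsplit v)
    _ = n * (n - 1) := by rw [Finset.sum_const, Finset.card_univ, Fintype.card_fin, smul_eq_mul]

end TournAux

/-- `T(n)`: the maximum number of cyclic triangles in an `n`-vertex tournament. -/
def maxCyclicTriangles (n : ℕ) : ℕ :=
  if n % 2 = 1 then n * (n ^ 2 - 1) / 24 else n * (n ^ 2 - 4) / 24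

/-- In any tournament on `n` vertices, the number of cyclic triangles is at most `T(n)`. -/
theorem stmt_0 (n : ℕ) (o : Fin n → Fin n → Bool)
    (hirr : ∀ i, o i i = false)
    (hasym : ∀ i j : Fin n, i ≠ j → o i j = !o j i) :
    Set.ncard {s : Finset (Fin n) | ∃ x y z : Fin n,
        o x y = true ∧ o y z = true ∧ o z x = true ∧ s = {x, y, z}} ≤
      maxCyclicTriangles n := by
  classical
  have hset : {s : Finset (Fin n) | ∃ x y z : Fin n,
      o x y = true ∧ o y z = true ∧ o z x = true ∧ s = {x, y, z}}
      = ↑(Finset.univ.filter (TournAux.isCyc o)) := by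
    ext s
    simp [TournAux.isCyc]
  rw [hset, Set.ncard_coe_finset]
  set c : ℕ := (Finset.univ.filter (TournAux.isCyc o)).card with hcdef
  have hkey := TournAux.key_identity o hirr hasym
  rw [← hcdef] at hkey
  by_cases hn3 : n < 3
  · have h30 : n.choose 3 = 0 := Nat.choose_eq_zero_of_lt (by omega)
    have hc0 : c = 0 := by omega
    rw [hc0]
    exact Nat.zero_le _
  push_neg at hn3
  -- ℤ-side quantities
  have h1 : (c : ℤ) + ∑ v : Fin n, ((TournAux.dd o v).choose 2 : ℤ) = (n.choose 3 : ℤ) := by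
    exact_mod_cast congrArg (Nat.cast : ℕ → ℤ) hkey
  have h2 : 6 * ((n.choose 3 : ℕ) : ℤ) = (n : ℤ) * ((n : ℤ) - 1) * ((n : ℤ) - 2) := by
    have := TournAux.six_choose_three n
    zify [show 1 ≤ n by omega, show 2 ≤ n by omega] at this
    linarith
  have h3 : 2 * ∑ v : Fin n, ((TournAux.dd o v).choose 2 : ℤ)
      + ∑ v : Fin n, ((TournAux.dd o v : ℤ))
      = ∑ v : Fin n, ((TournAux.dd o v : ℤ))^2 := by
    rw [Finset.mul_sum, ← Finset.sum_add_distrib]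
    refine Finset.sum_congr rfl (fun v _ => ?_)
    have := TournAux.two_mul_choose_two (TournAux.dd o v)
    have h := congrArg (Nat.cast : ℕ → ℤ) this
    push_cast at h
    nlinarith [h]
  have h4 : 2 * ∑ v : Fin n, ((TournAux.dd o v : ℤ)) = (n : ℤ) * ((n : ℤ) - 1) := by
    have := TournAux.sum_dd o hirr hasym
    have h := congrArg (Nat.cast : ℕ → ℤ) this
    push_cast [show 1 ≤ n by omega] at h
    linarith
  have h5 : ∑ v : Fin n, (2 * ((TournAux.dd o v : ℤ)) - ((n : ℤ) - 1))^2
      = 4 * ∑ v : Fin n, ((TournAux.dd o v : ℤ))^2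
        - 4 * ((n : ℤ) - 1) * ∑ v : Fin n, ((TournAux.dd o v : ℤ))
        + (n : ℤ) * ((n : ℤ) - 1)^2 := by
    have expand : ∀ v : Fin n, (2 * ((TournAux.dd o v : ℤ)) - ((n : ℤ) - 1))^2
        = 4 * ((TournAux.dd o v : ℤ))^2 - 4 * ((n : ℤ) - 1) * ((TournAux.dd o v : ℤ))
          + ((n : ℤ) - 1)^2 := fun v => by ring
    rw [Finset.sum_congr rfl (fun v _ => expand v), Finset.sum_add_distrib,
      Finset.sum_sub_distrib, ← Finset.mul_sum, ← Finset.mul_sum, Finset.sum_const,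
      Finset.card_univ, Fintype.card_fin, nsmul_eq_mul]
  set E : ℤ := ∑ v : Fin n, (2 * ((TournAux.dd o v : ℤ)) - ((n : ℤ) - 1))^2 with hE
  have h24 : 24 * (c : ℤ) = (n : ℤ) * ((n : ℤ) - 1) * ((n : ℤ) + 1) - 3 * E := by
    linear_combination 24 * h1 + 4 * h2 - 12 * h3 + (12 - 6 * (n:ℤ)) * h4 + 3 * h5
  unfold maxCyclicTriangles
  split_ifs with hpar
  · rw [Nat.le_div_iff_mul_le (by norm_num : 0 < 24)]
    have hsq : 1 ≤ n ^ 2 := by nlinarith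
    zify [hsq]
    have hE0 : (0 : ℤ) ≤ E := Finset.sum_nonneg (fun v _ => sq_nonneg _)
    nlinarith [h24, hE0]
  · rw [Nat.le_div_iff_mul_le (by norm_num : 0 < 24)]
    have hsq : 4 ≤ n ^ 2 := by nlinarith
    zify [hsq]
    have hn2 : (n : ℤ) % 2 = 0 := by omega
    have hEN : (n : ℤ) ≤ E := by
      rw [hE]
      calc (n : ℤ) = ∑ _v : Fin n, (1 : ℤ) := by simp
        _ ≤ ∑ v : Fin n, (2 * ((TournAux.dd o v : ℤ)) - ((n : ℤ) - 1))^2 := by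
            refine Finset.sum_le_sum (fun v _ => ?_)
            have hx : (2 * ((TournAux.dd o v : ℤ)) - ((n : ℤ) - 1)) ≠ 0 := by omega
            have h1a := Int.one_le_abs hx
            nlinarith [sq_abs (2 * ((TournAux.dd o v : ℤ)) - ((n : ℤ) - 1))]
    nlinarith [h24, hEN]
end

section
/- Let χ be an edge coloring of the complete graph K_n in which every color class is a tripartite graph (its vertex set can be 3-partitioned so every edge of that color crosses parts). For each vertex v, let d^1(v) be the maximum, over colors c, of the number of edges at v with color c. Then Σ_{v} d^1(v) ≤ 2n²/3. -/
/-- `colorCount n χ v c`: the number of edges at `v` with color `c`. -/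
def colorCount (n : ℕ) (χ : Fin n → Fin n → ℕ) (v : Fin n) (c : ℕ) : ℕ :=
  (Finset.univ.filter fun u => u ≠ v ∧ χ v u = c).card

/-- If every color class of an edge coloring of `K_n` is tripartite, and `d¹(v)` is the
maximum number of edges at `v` sharing one color, then `Σ_v d¹(v) ≤ 2n²/3`. -/
theorem stmt_2 (n : ℕ) (χ : Fin n → Fin n → ℕ)
    (hsymm : ∀ i j, χ i j = χ j i)
    (htri : ∀ c : ℕ, ∃ p : Fin n → Fin 3,
      ∀ i j : Fin n, i ≠ j → χ i j = c → p i ≠ p j)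
    (d1 : Fin n → ℕ)
    (hd1max : ∀ v c, colorCount n χ v c ≤ d1 v)
    (hd1attain : ∀ v, ∃ c, d1 v = colorCount n χ v c) :
    3 * ∑ v : Fin n, d1 v ≤ 2 * n ^ 2 := by
  classical
  choose cv hcv using hd1attain
  choose pp hpp using htri
  set p' : Fin n → Fin 3 := fun v => pp (cv v) v with hp'def
  set a : Fin n → Fin n → ℕ :=
    fun v u => if u ≠ v ∧ χ v u = cv v then 1 else 0 with hadef
  set S : ℕ := ∑ v : Fin n, ∑ u : Fin n, a v u with hSdef
  set K : ℕ := ∑ v : Fin n, ∑ u : Fin n,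
    (if cv u = cv v ∧ p' u = p' v then 1 else 0) with hKdef
  set C2 : ℕ := ∑ v : Fin n, ∑ u : Fin n,
    (if cv u = cv v then 1 else 0) with hC2def
  -- the sum of d1 equals S
  have hsum : ∑ v : Fin n, d1 v = S := by
    rw [hSdef]
    refine Finset.sum_congr rfl fun v _ => ?_
    rw [hcv v]
    unfold colorCount
    rw [Finset.card_filter]
  -- pointwise inequality
  have hpoint : ∀ v u : Fin n,
      a v u + a u v + 2 * (if cv u = cv v ∧ p' u = p' v then 1 else 0)
        ≤ 1 + (if cv u = cv v then 1 else 0) := by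
    intro v u
    by_cases hk : cv u = cv v ∧ p' u = p' v
    · have havu : a v u = 0 := by
        rw [hadef]
        simp only [ite_eq_right_iff, one_ne_zero]
        rintro ⟨huv, hχ⟩
        have := hpp (cv v) v u (Ne.symm huv) hχ
        apply this
        have : pp (cv u) u = pp (cv v) v := hk.2
        rw [hk.1] at this
        exact this.symm
      have hauv : a u v = 0 := by
        rw [hadef]
        simp only [ite_eq_right_iff, one_ne_zero]
        rintro ⟨hvu, hχ⟩
        have hχ' : χ u v = cv v := by rw [hχ, hk.1]
        have := hpp (cv v) u v (Ne.symm hvu) hχ'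
        apply this
        have : pp (cv u) u = pp (cv v) v := hk.2
        rw [hk.1] at this
        exact this
      rw [havu, hauv, if_pos hk, if_pos hk.1]
    · rw [if_neg hk]
      by_cases hc : cv u = cv v
      · have h1 : a v u ≤ 1 := by simp only [hadef]; split <;> omega
        have h2 : a u v ≤ 1 := by simp only [hadef]; split <;> omega
        rw [if_pos hc]; omega
      · -- different primary colors: at most one of the two indicators is 1
        rw [if_neg hc]
        by_cases h1 : u ≠ v ∧ χ v u = cv v
        · have h2 : a u v = 0 := by
            rw [hadef]
            simp only [ite_eq_right_iff, one_ne_zero]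
            rintro ⟨hvu, hχ⟩
            apply hc
            rw [← hχ, hsymm u v, h1.2]
          have h1' : a v u = 1 := by rw [hadef]; exact if_pos h1
          omega
        · have h1' : a v u = 0 := by rw [hadef]; exact if_neg h1
          have h2 : a u v ≤ 1 := by simp only [hadef]; split <;> omega
          omega
  -- summed inequality
  have hmain : S + S + 2 * K ≤ n * n + C2 := by
    have h1 : ∑ v : Fin n, ∑ u : Fin n,
        (a v u + a u v + 2 * (if cv u = cv v ∧ p' u = p' v then 1 else 0))
        ≤ ∑ v : Fin n, ∑ u : Fin n, (1 + (if cv u = cv v then 1 else 0)) := by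
      refine Finset.sum_le_sum fun v _ => Finset.sum_le_sum fun u _ => hpoint v u
    have h2 : ∑ v : Fin n, ∑ u : Fin n, a u v = S := by
      rw [hSdef, Finset.sum_comm]
    simp only [Finset.sum_add_distrib, ← Finset.mul_sum, h2] at h1
    simp only [Finset.sum_const, Finset.card_univ, Fintype.card_fin, smul_eq_mul,
      mul_one] at h1
    calc S + S + 2 * K = S + S + 2 * K := rfl
      _ ≤ n * n + C2 := by
        rw [hKdef, hC2def]
        convert h1 using 2 <;> ring_nf <;> simp [Finset.mul_sum]
  -- C2 ≤ n * n
  have hC2n : C2 ≤ n * n := by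
    rw [hC2def]
    calc ∑ v : Fin n, ∑ u : Fin n, (if cv u = cv v then 1 else 0)
        ≤ ∑ _v : Fin n, ∑ _u : Fin n, 1 := by
          refine Finset.sum_le_sum fun v _ => Finset.sum_le_sum fun u _ => ?_
          split <;> omega
      _ = n * n := by simp [mul_comm]
  -- the Cauchy–Schwarz step: C2 ≤ 3 * K
  have hC2K : C2 ≤ 3 * K := by
    have hC2' : C2 = ∑ v : Fin n,
        (Finset.univ.filter fun u => cv u = cv v).card := by
      rw [hC2def]
      refine Finset.sum_congr rfl fun v _ => ?_
      rw [Finset.card_filter]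
    have hK' : K = ∑ v : Fin n,
        (Finset.univ.filter fun u => cv u = cv v ∧ p' u = p' v).card := by
      rw [hKdef]
      refine Finset.sum_congr rfl fun v _ => ?_
      rw [Finset.card_filter]
    rw [hC2', hK']
    have hmap : ∀ v ∈ (Finset.univ : Finset (Fin n)),
        cv v ∈ Finset.univ.image cv :=
      fun v _ => Finset.mem_image_of_mem _ (Finset.mem_univ v)
    rw [← Finset.sum_fiberwise_of_maps_to hmap
      (fun v => (Finset.univ.filter fun u => cv u = cv v).card),
      ← Finset.sum_fiberwise_of_maps_to hmap
      (fun v => (Finset.univ.filter fun u => cv u = cv v ∧ p' u = p' v).card),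
      Finset.mul_sum]
    refine Finset.sum_le_sum fun b _ => ?_
    set N : Fin 3 → ℕ :=
      fun i => (Finset.univ.filter fun u => cv u = b ∧ p' u = i).card with hNdef
    have hfibcard : (Finset.univ.filter fun v => cv v = b).card = ∑ i : Fin 3, N i := by
      rw [Finset.card_eq_sum_card_fiberwise
        (f := p') (t := Finset.univ) (fun x _ => Finset.mem_univ _)]
      refine Finset.sum_congr rfl fun i _ => ?_
      rw [Finset.filter_filter]
    have hLHS : ∑ v ∈ Finset.univ.filter fun v => cv v = b,
        (Finset.univ.filter fun u => cv u = cv v).card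
        = (∑ i : Fin 3, N i) * (∑ i : Fin 3, N i) := by
      rw [Finset.sum_congr rfl (fun v hv => ?_), Finset.sum_const, hfibcard,
        smul_eq_mul]
      have hb : cv v = b := (Finset.mem_filter.mp hv).2
      rw [← hfibcard]
      congr 1
      refine Finset.filter_congr fun u _ => ?_
      rw [hb]
    have hRHS : ∑ v ∈ Finset.univ.filter fun v => cv v = b,
        (Finset.univ.filter fun u => cv u = cv v ∧ p' u = p' v).card
        = ∑ i : Fin 3, N i * N i := by
      rw [Finset.sum_fiberwise_of_maps_to (g := p') (t := Finset.univ)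
        (fun x _ => Finset.mem_univ _)
        (fun v => (Finset.univ.filter fun u => cv u = cv v ∧ p' u = p' v).card)
        |>.symm]
      refine Finset.sum_congr rfl fun i _ => ?_
      have : ∀ v ∈ (Finset.univ.filter fun v => cv v = b).filter fun v => p' v = i,
          (Finset.univ.filter fun u => cv u = cv v ∧ p' u = p' v).card = N i := by
        intro v hv
        simp only [Finset.mem_filter] at hv
        rw [hNdef]
        congr 1
        refine Finset.filter_congr fun u _ => ?_
        rw [hv.1.2, hv.2]
      rw [Finset.sum_congr rfl this, Finset.sum_const, smul_eq_mul]
      congr 1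
      rw [Finset.filter_filter]
    rw [hLHS, hRHS, Fin.sum_univ_three, Fin.sum_univ_three]
    nlinarith [two_mul_le_add_sq (N 0) (N 1), two_mul_le_add_sq (N 1) (N 2), two_mul_le_add_sq (N 0) (N 2), sq (N 0), sq (N 1), sq (N 2)]
  rw [hsum]
  have hn2 : n ^ 2 = n * n := sq n
  omega
end

section
/- Let χ be an edge coloring of the complete graph K_n (n ≥ 2) in which every color class is tripartite. If the primary colors of the vertices are not all equal (i.e., there exist two vertices whose most-common incident colors differ), then Σ_{v} d^1(v) ≤ 2n²/3 − (n−1)/3. -/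
open Finset

lemma ebound_arith (n E a b : ℕ) (ha : 1 ≤ a) (hb : 1 ≤ b) (hab : a + b = n)
    (hE : E ≤ a*a + b*b) : E + 2*n ≤ n*n + 2 := by
  obtain ⟨a', rfl⟩ := Nat.exists_eq_add_of_le ha
  obtain ⟨b', rfl⟩ := Nat.exists_eq_add_of_le hb
  subst hab
  nlinarith

lemma sq3 (a b c : ℕ) : (a+b+c)*(a+b+c) ≤ 3*(a*a+b*b+c*c) := by zify; nlinarith [sq_nonneg ((a:ℤ)-b), sq_nonneg ((a:ℤ)-c), sq_nonneg ((b:ℤ)-c)]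

lemma class_bound {n : ℕ} (χ : Fin n → Fin n → ℕ) (c : ℕ) (p : Fin n → Fin 3)
    (hp : ∀ i j : Fin n, i ≠ j → χ i j = c → p i ≠ p j) (C : Finset (Fin n)) :
    3 * ∑ v ∈ C, (C.filter fun u => u ≠ v ∧ χ v u = c).card ≤ 2 * (C.card * C.card) := by
  set t : Fin 3 → ℕ := fun i => (C.filter fun u => p u = i).card with ht
  have hsub : ∀ v, (C.filter fun u => u ≠ v ∧ χ v u = c).card
      ≤ (C.filter fun u => ¬ p u = p v).card := by
    intro v
    apply card_le_card
    intro u hu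
    rw [mem_filter] at hu ⊢
    refine ⟨hu.1, ?_⟩
    have hu := hu.2
    exact fun h => (hp v u (Ne.symm hu.1) hu.2) h.symm
  have hsplit : ∀ v, (C.filter fun u => p u = p v).card
      + (C.filter fun u => ¬ p u = p v).card = C.card := fun v =>
    card_filter_add_card_filter_not (p := fun u => p u = p v)
  have hfib : ∑ v ∈ C, t (p v) = ∑ i : Fin 3, t i * t i := by
    rw [← Finset.sum_fiberwise C p (fun v => t (p v))]
    apply Finset.sum_congr rfl
    intro i _
    rw [Finset.sum_congr rfl (fun v hv => by
      rw [(Finset.mem_filter.mp hv).2]), Finset.sum_const, smul_eq_mul]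
  have hcard : ∑ i : Fin 3, t i = C.card := by
    rw [ht]
    exact (Finset.card_eq_sum_card_fiberwise (fun x _ => Finset.mem_univ (p x))).symm
  have hCS : C.card * C.card ≤ 3 * ∑ i : Fin 3, t i * t i := by
    rw [← hcard, Fin.sum_univ_three, Fin.sum_univ_three]
    exact sq3 _ _ _
  have h1 : ∑ v ∈ C, (C.filter fun u => ¬ p u = p v).card + ∑ v ∈ C, t (p v) = C.card * C.card := by
    rw [← Finset.sum_add_distrib]
    calc ∑ v ∈ C, ((C.filter fun u => ¬ p u = p v).card + t (p v))
        = ∑ v ∈ C, C.card := Finset.sum_congr rfl (fun v _ => by rw [add_comm]; exact hsplit v)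
      _ = C.card * C.card := by rw [Finset.sum_const, smul_eq_mul]
  have h2 : ∑ v ∈ C, (C.filter fun u => u ≠ v ∧ χ v u = c).card
      ≤ ∑ v ∈ C, (C.filter fun u => ¬ p u = p v).card := Finset.sum_le_sum fun v _ => hsub v
  rw [hfib] at h1
  omega


/-- If every color class of an edge coloring of `K_n` (n ≥ 2) is tripartite, `d¹(v)` is the
maximum number of edges at `v` sharing a color, attained by the primary color of `v`, and the
primary colors of the vertices are not all equal, then `Σ_v d¹(v) ≤ 2n²/3 − (n−1)/3`. -/
theorem stmt_3 (n : ℕ) (hn : 2 ≤ n) (χ : Fin n → Fin n → ℕ)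
    (hsymm : ∀ i j, χ i j = χ j i)
    (htri : ∀ c : ℕ, ∃ p : Fin n → Fin 3,
      ∀ i j : Fin n, i ≠ j → χ i j = c → p i ≠ p j)
    (d1 : Fin n → ℕ) (primary : Fin n → ℕ)
    (hd1max : ∀ v c, colorCount n χ v c ≤ d1 v)
    (hprimary : ∀ v, d1 v = colorCount n χ v (primary v))
    (hnotall : ∃ u v : Fin n, primary u ≠ primary v) :
    3 * ∑ v : Fin n, d1 v + (n - 1) ≤ 2 * n ^ 2 := by
  classical
  set Mv : Fin n → ℕ := fun v =>
    (univ.filter fun u => (u ≠ v ∧ χ v u = primary v) ∧ primary u = primary v).card with hMv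
  set Xv : Fin n → ℕ := fun v =>
    (univ.filter fun u => (u ≠ v ∧ χ v u = primary v) ∧ ¬ primary u = primary v).card with hXv
  -- split Σ d1 = M + X
  have hsplit : ∑ v : Fin n, d1 v = ∑ v : Fin n, Mv v + ∑ v : Fin n, Xv v := by
    rw [← Finset.sum_add_distrib]
    apply Finset.sum_congr rfl
    intro v _
    rw [hprimary v]
    show colorCount n χ v (primary v) = _
    unfold colorCount
    have h := card_filter_add_card_filter_not
      (s := Finset.univ.filter fun u => u ≠ v ∧ χ v u = primary v)
      (p := fun u => primary u = primary v)
    rw [filter_filter, filter_filter] at h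
    rw [hMv, hXv]
    exact h.symm
  -- E and D
  set E : ℕ := ∑ v : Fin n, (univ.filter fun u => primary u = primary v).card with hE
  set D : ℕ := ∑ v : Fin n, (univ.filter fun u => ¬ primary u = primary v).card with hD
  have hED : E + D = n * n := by
    rw [hE, hD, ← Finset.sum_add_distrib]
    calc ∑ v : Fin n, ((univ.filter fun u => primary u = primary v).card
          + (univ.filter fun u => ¬ primary u = primary v).card)
        = ∑ v : Fin n, n := Finset.sum_congr rfl (fun v _ => by
          rw [card_filter_add_card_filter_not, card_univ, Fintype.card_fin])
      _ = n * n := by rw [Finset.sum_const, card_univ, Fintype.card_fin, smul_eq_mul]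
  -- cross bound : 2X ≤ D
  have hcross : 2 * ∑ v : Fin n, Xv v ≤ D := by
    set Xv' : Fin n → ℕ := fun v =>
      (univ.filter fun u => (u ≠ v ∧ χ u v = primary u) ∧ ¬ primary u = primary v).card with hXv'
    have hswap : ∑ v : Fin n, Xv v = ∑ v : Fin n, Xv' v := by
      simp only [hXv, hXv', Finset.card_filter]
      rw [Finset.sum_comm]
      apply Finset.sum_congr rfl
      intro u _
      apply Finset.sum_congr rfl
      intro v _
      refine if_congr ?_ rfl rfl
      constructor
      · rintro ⟨⟨h1, h2⟩, h3⟩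
        exact ⟨⟨Ne.symm h1, h2⟩, fun h => h3 h.symm⟩
      · rintro ⟨⟨h1, h2⟩, h3⟩
        exact ⟨⟨Ne.symm h1, h2⟩, fun h => h3 h.symm⟩
    have hdisj : ∀ v, Xv v + Xv' v ≤ (univ.filter fun u => ¬ primary u = primary v).card := by
      intro v
      rw [hXv, hXv']
      simp only
      rw [← Finset.card_union_of_disjoint]
      · apply Finset.card_le_card
        intro u hu
        rw [Finset.mem_union] at hu
        rw [Finset.mem_filter]
        rcases hu with hu | hu <;> exact ⟨(Finset.mem_filter.mp hu).1, (Finset.mem_filter.mp hu).2.2⟩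
      · rw [Finset.disjoint_filter]
        rintro u _ ⟨⟨h1, h2⟩, h3⟩ ⟨⟨_, h2'⟩, _⟩
        exact h3 (by rw [← h2', ← h2, hsymm])
    calc 2 * ∑ v : Fin n, Xv v = ∑ v : Fin n, Xv v + ∑ v : Fin n, Xv' v := by rw [hswap]; ring
      _ ≤ D := by rw [hD, ← Finset.sum_add_distrib]; exact Finset.sum_le_sum fun v _ => hdisj v
  -- mono bound : 3M ≤ 2E
  have hmono : 3 * ∑ v : Fin n, Mv v ≤ 2 * E := by
    set I := univ.image primary with hI
    have hfib : ∑ v : Fin n, Mv v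
        = ∑ c ∈ I, ∑ v ∈ univ.filter fun v => primary v = c, Mv v :=
      (Finset.sum_fiberwise_of_maps_to (fun x _ => Finset.mem_image_of_mem primary (mem_univ x)) Mv).symm
    have hEfib : E = ∑ c ∈ I, (univ.filter fun v => primary v = c).card
        * (univ.filter fun v => primary v = c).card := by
      rw [hE, ← Finset.sum_fiberwise_of_maps_to
        (fun x _ => Finset.mem_image_of_mem primary (mem_univ x))
        (fun v => (univ.filter fun u => primary u = primary v).card)]
      apply Finset.sum_congr rfl
      intro c _
      rw [Finset.sum_congr rfl (fun v hv => by
        rw [show primary v = c from (Finset.mem_filter.mp hv).2]), Finset.sum_const, smul_eq_mul]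
    rw [hfib, hEfib, Finset.mul_sum, Finset.mul_sum]
    apply Finset.sum_le_sum
    intro c _
    obtain ⟨p, hp⟩ := htri c
    set C := univ.filter fun v => primary v = c with hC
    have hinner : ∀ v ∈ C, Mv v = (C.filter fun u => u ≠ v ∧ χ v u = c).card := by
      intro v hv
      have hvc : primary v = c := (Finset.mem_filter.mp hv).2
      rw [hMv]
      simp only
      congr 1
      rw [hC, filter_filter]
      apply Finset.filter_congr
      intro u _
      simp only [hvc]
      tauto
    rw [Finset.sum_congr rfl hinner]
    exact class_bound χ c p hp C
  -- E bound
  obtain ⟨u₀, v₀, huv⟩ := hnotall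
  set a : ℕ := (univ.filter fun u => primary u = primary u₀).card with ha
  have ha1 : 1 ≤ a := by
    rw [ha]
    exact Finset.card_pos.mpr ⟨u₀, Finset.mem_filter.mpr ⟨mem_univ _, rfl⟩⟩
  have ha2 : a + 1 ≤ n := by
    have : (univ.filter fun u => primary u = primary u₀) ⊆ univ.erase v₀ := by
      intro x hx
      rw [Finset.mem_erase]
      exact ⟨fun h => huv (by rw [← h]; exact ((Finset.mem_filter.mp hx).2).symm), mem_univ x⟩
    have := Finset.card_le_card this
    rw [Finset.card_erase_of_mem (mem_univ v₀), card_univ, Fintype.card_fin] at this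
    omega
  have hEbound : E + 2 * n ≤ n * n + 2 := by
    have hper : ∀ v : Fin n, (univ.filter fun u => primary u = primary v).card
        ≤ if primary v = primary u₀ then a else n - a := by
      intro v
      by_cases hv : primary v = primary u₀
      · rw [if_pos hv, ha]
        apply le_of_eq
        congr 1
        apply Finset.filter_congr
        intro u _
        rw [hv]
      · rw [if_neg hv]
        have hsub : (univ.filter fun u => primary u = primary v)
            ⊆ univ \ (univ.filter fun u => primary u = primary u₀) := by
          intro x hx
          rw [Finset.mem_sdiff, Finset.mem_filter]
          refine ⟨mem_univ x, fun hc => hv ?_⟩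
          rw [← (Finset.mem_filter.mp hx).2, hc.2]
        have := Finset.card_le_card hsub
        rwa [Finset.card_sdiff_of_subset (Finset.filter_subset _ _), card_univ, Fintype.card_fin, ← ha] at this
    have hEle : E ≤ a * a + (n - a) * (n - a) := by
      calc E ≤ ∑ v : Fin n, if primary v = primary u₀ then a else n - a :=
            Finset.sum_le_sum fun v _ => hper v
        _ = a * a + (n - a) * (n - a) := by
            rw [Finset.sum_ite, Finset.sum_const, Finset.sum_const, smul_eq_mul, smul_eq_mul, ← ha]
            have hcard2 : (univ.filter fun v => ¬ primary v = primary u₀).card = n - a := by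
              have := card_filter_add_card_filter_not
                (s := (univ : Finset (Fin n))) (p := fun v => primary v = primary u₀)
              rw [card_univ, Fintype.card_fin, ← ha] at this
              omega
            rw [hcard2]
    exact ebound_arith n E a (n - a) ha1 (by omega) (by omega) hEle
  -- combine
  have key : ∀ q Ev Dv M X S : ℕ, Ev + Dv = q → Ev + 2*n ≤ q + 2 → 3*M ≤ 2*Ev → 2*X ≤ Dv →
      S = M + X → 3*S + (n-1) ≤ 2*q := by intros; omega
  have := key (n*n) E D (∑ v : Fin n, Mv v) (∑ v : Fin n, Xv v) (∑ v : Fin n, d1 v)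
    hED hEbound hmono hcross hsplit
  calc 3 * ∑ v : Fin n, d1 v + (n-1) ≤ 2 * (n*n) := this
    _ = 2 * n ^ 2 := by ring
end

section
/- Let χ be an edge coloring of K_n where every color class is tripartite. For each vertex v and t ≥ 1, let d^1(v) ≥ d^2(v) ≥ … be the sorted multiplicities of colors on edges incident to v. Then Σ_{v} (d^1(v)+⋯+d^t(v)) ≤ (1 − 3^{−t}) n². -/
/-!
Fix a tripartition `p c` for every color `c` and give every color an independent uniformly random
part `σ c`. A vertex `v` is selected when `σ c = p c v` for all `c ∈ S v`, which has probability
`3⁻ᵗ`; counting instead of measuring, this event is `extensions U (S v) (p · v)`, where `σ` ranges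
over `U → Fin 3` for a finite set `U` of colors containing every `S v`. Two vertices joined by an edge whose color lies in `S v ∩ S u` are never both selected, and
if the color lies in only one of the two sets they are both selected with probability at most
`3⁻ᵗ⁻¹ ≤ 3⁻ᵗ / 2`. The second-moment bound `(𝔼 X)² ≤ 𝔼 X²` for the number `X` of selected vertices
then gives `n² ≤ 3ᵗ · #{(v, u) | u = v ∨ χ v u ∉ S v}`, and the remaining ordered pairs are exactly
the ones counted by `∑ v, ∑ c ∈ S v, colorCount n χ v c`.
-/

open Finset

theorem sq_sum_card_le_card_mul_sum_card_inter {ι Ω : Type*} [Fintype Ω] [DecidableEq Ω]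
    (s : Finset ι) (A : ι → Finset Ω) :
    (∑ i ∈ s, #(A i)) ^ 2 ≤ Fintype.card Ω * ∑ i ∈ s, ∑ j ∈ s, #(A i ∩ A j) := by
  have hcard : ∀ B : Finset Ω, #B = ∑ ω, if ω ∈ B then 1 else 0 := fun B => by simp
  calc (∑ i ∈ s, #(A i)) ^ 2
      = (∑ ω, ∑ i ∈ s, if ω ∈ A i then 1 else 0) ^ 2 := by simp_rw [hcard, sum_comm (s := s)]
    _ ≤ Fintype.card Ω * ∑ ω, (∑ i ∈ s, if ω ∈ A i then 1 else 0) ^ 2 := sq_sum_le_card_mul_sum_sq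
    _ = Fintype.card Ω * ∑ i ∈ s, ∑ j ∈ s, #(A i ∩ A j) := by
      simp_rw [hcard, sq, sum_mul_sum, mem_inter, ite_zero_mul_ite_zero, mul_one]
      rw [sum_comm]
      simp_rw [sum_comm (s := univ)]

section Extensions

variable {κ β : Type*} [DecidableEq κ] [Fintype β] [DecidableEq β]

def extensions (U s : Finset κ) (f : κ → β) : Finset (U → β) :=
  {σ | ∀ a : U, ↑a ∈ s → σ a = f a}

variable {U s t : Finset κ} {f g : κ → β} {c : κ}

theorem card_extensions (hs : s ⊆ U) (f : κ → β) :
    #(extensions U s f) = Fintype.card β ^ (#U - #s) := by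
  have hpi : extensions U s f = Fintype.piFinset fun a : U => if ↑a ∈ s then {f a} else univ := by
    ext σ
    simp only [extensions, mem_filter, mem_univ, true_and, Fintype.mem_piFinset]
    refine forall_congr' fun a => ?_
    split_ifs <;> simp [*]
  have hfree : #{a : U | ↑a ∉ s} = #U - #s := by
    have h : ({a : U | ↑a ∉ s} : Finset U) = (U \ s).subtype (· ∈ U) := by ext a; simp
    rw [h, card_subtype, filter_true_of_mem (fun a ha => (mem_sdiff.1 ha).1),
      card_sdiff_of_subset hs]
  rw [hpi, Fintype.card_piFinset]
  simp only [apply_ite card, card_singleton, card_univ]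
  rw [prod_ite, prod_const_one, prod_const, one_mul, hfree]

theorem disjoint_extensions (hcU : c ∈ U) (hcs : c ∈ s) (hct : c ∈ t) (hfg : f c ≠ g c) :
    Disjoint (extensions U s f) (extensions U t g) := by
  rw [disjoint_left]
  intro σ hσf hσg
  simp only [extensions, mem_filter, mem_univ, true_and] at hσf hσg
  exact hfg ((hσf ⟨c, hcU⟩ hcs).symm.trans (hσg ⟨c, hcU⟩ hct))

theorem extensions_inter_subset_insert (hct : c ∈ t) :
    extensions U s f ∩ extensions U t g ⊆ extensions U (insert c s) (Function.update f c (g c)) := by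
  intro σ hσ
  simp only [extensions, mem_inter, mem_filter, mem_univ, true_and] at hσ ⊢
  intro a ha
  by_cases hac : ↑a = c
  · rw [hac, Function.update_self, hσ.2 a (hac ▸ hct), hac]
  · rw [Function.update_of_ne hac]
    exact hσ.1 a ((mem_insert.1 ha).resolve_left hac)

theorem card_mul_card_extensions_inter_le (hsU : s ⊆ U) (hcU : c ∈ U) (hcs : c ∉ s) (hct : c ∈ t) :
    Fintype.card β * #(extensions U s f ∩ extensions U t g) ≤ #(extensions U s f) := by
  have hins : insert c s ⊆ U := insert_subset hcU hsU
  have hlt : #s < #U := by simpa [card_insert_of_notMem hcs] using card_le_card hins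
  calc Fintype.card β * #(extensions U s f ∩ extensions U t g)
      ≤ Fintype.card β * #(extensions U (insert c s) (Function.update f c (g c))) :=
        Nat.mul_le_mul_left _ (card_le_card (extensions_inter_subset_insert hct))
    _ = #(extensions U s f) := by
        rw [card_extensions hins, card_extensions hsU, card_insert_of_notMem hcs, ← pow_succ']
        congr 1
        omega

end Extensions

section TripartiteColoring

variable {n t : ℕ} {χ : Fin n → Fin n → ℕ} {p : ℕ → Fin n → Fin 3} {S : Fin n → Finset ℕ}
  {U : Finset ℕ}

theorem two_mul_card_extensions_inter_le (hsymm : ∀ i j, χ i j = χ j i)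
    (hp : ∀ i j, i ≠ j → p (χ i j) i ≠ p (χ i j) j) (hS : ∀ v, #(S v) = t)
    (hSU : ∀ v, S v ⊆ U) (v u : Fin n) :
    2 * #(extensions U (S v) (p · v) ∩ extensions U (S u) (p · u)) ≤
      3 ^ (#U - t) * ((if u = v ∨ χ v u ∉ S v then 1 else 0) +
        (if v = u ∨ χ u v ∉ S u then 1 else 0)) := by
  have hA : ∀ w, #(extensions U (S w) (p · w)) = 3 ^ (#U - t) := fun w => by
    rw [card_extensions (hSU w), hS w, Fintype.card_fin]
  have hthird : ∀ {w w' c}, c ∉ S w → c ∈ S w' →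
      3 * #(extensions U (S w) (p · w) ∩ extensions U (S w') (p · w')) ≤ 3 ^ (#U - t) :=
    fun {w w' _} hcw hcw' => by
      simpa [hA] using card_mul_card_extensions_inter_le (f := (p · w)) (g := (p · w'))
        (hSU w) (hSU w' hcw') hcw hcw'
  rcases eq_or_ne u v with rfl | huv
  · simp only [inter_self, hA, true_or, if_true]
    omega
  simp only [huv, huv.symm, hsymm u v, false_or]
  by_cases hv : χ v u ∈ S v <;> by_cases hu : χ v u ∈ S u <;>
    simp only [hv, hu, not_true_eq_false, not_false_eq_true, if_true, if_false]
  · rw [disjoint_iff_inter_eq_empty.1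
      (disjoint_extensions (hSU v hv) hv hu (hp v u huv.symm)), card_empty]
    omega
  · have := hthird hu hv
    rw [inter_comm]
    omega
  · have := hthird hv hu
    omega
  · have := hA v ▸ card_le_card (inter_subset_left (s₁ := extensions U (S v) (p · v))
      (s₂ := extensions U (S u) (p · u)))
    omega

theorem sum_sum_card_extensions_inter_le (hsymm : ∀ i j, χ i j = χ j i)
    (hp : ∀ i j, i ≠ j → p (χ i j) i ≠ p (χ i j) j) (hS : ∀ v, #(S v) = t)
    (hSU : ∀ v, S v ⊆ U) :
    ∑ v, ∑ u, #(extensions U (S v) (p · v) ∩ extensions U (S u) (p · u)) ≤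
      3 ^ (#U - t) * ∑ v, #{u | u = v ∨ χ v u ∉ S v} := by
  have h2 := calc
    2 * ∑ v, ∑ u, #(extensions U (S v) (p · v) ∩ extensions U (S u) (p · u))
      = ∑ v, ∑ u, 2 * #(extensions U (S v) (p · v) ∩ extensions U (S u) (p · u)) := by
        simp_rw [mul_sum]
    _ ≤ ∑ v, ∑ u, 3 ^ (#U - t) * ((if u = v ∨ χ v u ∉ S v then 1 else 0) +
          (if v = u ∨ χ u v ∉ S u then 1 else 0)) :=
        sum_le_sum fun v _ => sum_le_sum fun u _ =>
          two_mul_card_extensions_inter_le hsymm hp hS hSU v u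
    _ = 2 * (3 ^ (#U - t) * ∑ v, #{u | u = v ∨ χ v u ∉ S v}) := by
        simp_rw [← mul_sum, sum_add_distrib, card_filter]
        rw [sum_comm (f := fun v u => if v = u ∨ χ u v ∉ S u then 1 else 0)]
        ring
  omega

theorem card_filter_add_sum_colorCount (χ : Fin n → Fin n → ℕ) (v : Fin n) (s : Finset ℕ) :
    #{u | u = v ∨ χ v u ∉ s} + ∑ c ∈ s, colorCount n χ v c = n := by
  have hfiber : ∑ c ∈ s, colorCount n χ v c = #{u | ¬(u = v ∨ χ v u ∉ s)} := by
    rw [card_eq_sum_card_fiberwise (f := χ v) (t := s) fun u hu => by simp_all]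
    refine sum_congr rfl fun c hc => congr_arg card ?_
    ext u
    simp only [mem_filter, mem_univ, true_and, not_or, not_not]
    constructor <;> rintro ⟨h, rfl⟩
    exacts [⟨⟨h, hc⟩, rfl⟩, ⟨h.1, rfl⟩]
  rw [hfiber, card_filter_add_card_filter_not, card_univ, Fintype.card_fin]

theorem sq_le_three_pow_mul_sum_card (hsymm : ∀ i j, χ i j = χ j i)
    (hp : ∀ i j, i ≠ j → p (χ i j) i ≠ p (χ i j) j) (hS : ∀ v, #(S v) = t) :
    n ^ 2 ≤ 3 ^ t * ∑ v, #{u | u = v ∨ χ v u ∉ S v} := by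
  set U := univ.biUnion S
  have hSU : ∀ v, S v ⊆ U := fun v => subset_biUnion_of_mem S (mem_univ v)
  set N := 3 ^ (#U - t)
  set A := fun v => extensions U (S v) (p · v)
  have hA : ∀ v, #(A v) = N := fun v => by
    rw [card_extensions (hSU v), hS v, Fintype.card_fin]
  have key : N ^ 2 * n ^ 2 ≤ N ^ 2 * (3 ^ t * ∑ v, #{u | u = v ∨ χ v u ∉ S v}) := calc
    N ^ 2 * n ^ 2 = (∑ v, #(A v)) ^ 2 := by
      simp only [hA, sum_const, card_univ, Fintype.card_fin, smul_eq_mul]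
      ring
    _ ≤ 3 ^ #U * ∑ v, ∑ u, #(A v ∩ A u) := by
        simpa using sq_sum_card_le_card_mul_sum_card_inter univ A
    _ ≤ (3 ^ t * N) * (N * ∑ v, #{u | u = v ∨ χ v u ∉ S v}) := by
        gcongr
        · rw [← pow_add]; exact Nat.pow_le_pow_right (by norm_num) (by omega)
        · exact sum_sum_card_extensions_inter_le hsymm hp hS hSU
    _ = N ^ 2 * (3 ^ t * ∑ v, #{u | u = v ∨ χ v u ∉ S v}) := by ring
  exact Nat.le_of_mul_le_mul_left key (by positivity)

end TripartiteColoring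

theorem stmt_4_general (n t : ℕ) (χ : Fin n → Fin n → ℕ)
    (hsymm : ∀ i j, χ i j = χ j i)
    (htri : ∀ c : ℕ, ∃ p : Fin n → Fin 3,
      ∀ i j : Fin n, i ≠ j → χ i j = c → p i ≠ p j)
    (S : Fin n → Finset ℕ) (hS : ∀ v, (S v).card = t) :
    3 ^ t * ∑ v : Fin n, ∑ c ∈ S v, colorCount n χ v c ≤ (3 ^ t - 1) * n ^ 2 := by
  choose p hp using htri
  have hsq := sq_le_three_pow_mul_sum_card hsymm (fun i j hij => hp _ i j hij rfl) hS
  have hsplit : ∑ v, #{u | u = v ∨ χ v u ∉ S v} + ∑ v, ∑ c ∈ S v, colorCount n χ v c = n ^ 2 := by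
    rw [← sum_add_distrib, sum_congr rfl fun v _ => card_filter_add_sum_colorCount χ v (S v)]
    simp [sq]
  rw [Nat.sub_one_mul, ← hsplit, mul_add]
  omega

/-- If every color class of an edge coloring of `K_n` is tripartite, then for any `t ≥ 1`,
`Σ_v (d¹(v) + ⋯ + dᵗ(v)) ≤ (1 − 3^{−t}) n²`.  Here the sum of the `t` largest color
multiplicities at `v` is expressed by quantifying over every choice of `t` distinct
colors at each vertex (the top-`t` sum is the maximum over such choices). -/
theorem stmt_4 (n t : ℕ) (ht : 1 ≤ t) (χ : Fin n → Fin n → ℕ)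
    (hsymm : ∀ i j, χ i j = χ j i)
    (htri : ∀ c : ℕ, ∃ p : Fin n → Fin 3,
      ∀ i j : Fin n, i ≠ j → χ i j = c → p i ≠ p j)
    (S : Fin n → Finset ℕ) (hS : ∀ v, (S v).card = t) :
    3 ^ t * ∑ v : Fin n, ∑ c ∈ S v, colorCount n χ v c ≤ (3 ^ t - 1) * n ^ 2 :=
  stmt_4_general n t χ hsymm htri S hS
end

section
/- Let d(n) be the function defined by d(1)=d(2)=d(3)=0 and the recursion d(6x−2)=2d(2x−1)+d(2x), d(6x−1)=d(2x−1)+2d(2x)+x, d(6x)=3d(2x), d(6x+1)=2d(2x)+d(2x+1)+x, d(6x+2)=d(2x)+2d(2x+1), d(6x+3)=3d(2x+1) for positive integers x. Then d(n) = 0 if and only if n is a power of 3, or a sum of two powers of 3, or a difference of two powers of 3. -/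
def P3 (n : ℕ) : Prop :=
  (∃ a : ℕ, n = 3 ^ a) ∨
  (∃ a b : ℕ, b < a ∧ n = 3 ^ a + 3 ^ b) ∨
  (∃ a b : ℕ, b < a ∧ n = 3 ^ a - 3 ^ b)

lemma pow3_mod2 (a : ℕ) : 3 ^ a % 2 = 1 := by
  induction a with
  | zero => rfl
  | succ k ih => rw [pow_succ]; omega

lemma pow3_pos (a : ℕ) : 1 ≤ 3 ^ a := Nat.one_le_pow a 3 (by norm_num)

lemma pow3_le {a b : ℕ} (h : b ≤ a) : 3 ^ b ≤ 3 ^ a :=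
  Nat.pow_le_pow_right (by norm_num) h

lemma pow3_mod3 {a : ℕ} (h : 1 ≤ a) : 3 ^ a % 3 = 0 := by
  obtain ⟨c, rfl⟩ : ∃ c, a = c + 1 := ⟨a - 1, by omega⟩
  rw [pow_succ]; omega

lemma pow3_mod6 {a : ℕ} (h : 1 ≤ a) : 3 ^ a % 6 = 3 := by
  induction a with
  | zero => omega
  | succ k ih =>
    rcases Nat.eq_zero_or_pos k with rfl | hk
    · rfl
    · have := ih hk
      rw [pow_succ]; omega

lemma P3_odd {n : ℕ} (h : P3 n) (ho : n % 2 = 1) : ∃ a, n = 3 ^ a := by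
  rcases h with h | ⟨a, b, hb, rfl⟩ | ⟨a, b, hb, rfl⟩
  · exact h
  · have := pow3_mod2 a; have := pow3_mod2 b; omega
  · have := pow3_mod2 a; have := pow3_mod2 b; have := pow3_le hb.le; omega

lemma P3_pow_add_one (c : ℕ) : P3 (3 ^ c + 1) := by
  rcases Nat.eq_zero_or_pos c with rfl | hc
  · exact Or.inr (Or.inr ⟨1, 0, by norm_num⟩)
  · exact Or.inr (Or.inl ⟨c, 0, hc, by simp⟩)

lemma P3_pow_sub_one {c : ℕ} (hc : 1 ≤ c) : P3 (3 ^ c - 1) :=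
  Or.inr (Or.inr ⟨c, 0, hc, by simp⟩)

lemma P3_mul3 {n : ℕ} (hn : 1 ≤ n) : P3 (3 * n) ↔ P3 n := by
  constructor
  · rintro (⟨a, ha⟩ | ⟨a, b, hb, hab⟩ | ⟨a, b, hb, hab⟩)
    · obtain ⟨c, rfl⟩ : ∃ c, a = c + 1 := by
        refine ⟨a - 1, ?_⟩
        rcases Nat.eq_zero_or_pos a with rfl | h
        · rw [pow_zero] at ha; omega
        · omega
      have h' : (3:ℕ) ^ (c + 1) = 3 * 3 ^ c := by ring
      exact Or.inl ⟨c, by omega⟩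
    · rcases Nat.eq_zero_or_pos b with rfl | hb0
      · have := pow3_mod3 hb
        simp at hab; omega
      · obtain ⟨c, rfl⟩ : ∃ c, b = c + 1 := ⟨b - 1, by omega⟩
        obtain ⟨e, rfl⟩ : ∃ e, a = e + 1 := ⟨a - 1, by omega⟩
        have h1 : (3:ℕ) ^ (e + 1) = 3 * 3 ^ e := by ring
        have h2 : (3:ℕ) ^ (c + 1) = 3 * 3 ^ c := by ring
        exact Or.inr (Or.inl ⟨e, c, by omega, by omega⟩)
    · rcases Nat.eq_zero_or_pos b with rfl | hb0
      · have := pow3_mod3 hb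
        have := pow3_le hb.le
        simp at hab; omega
      · obtain ⟨c, rfl⟩ : ∃ c, b = c + 1 := ⟨b - 1, by omega⟩
        obtain ⟨e, rfl⟩ : ∃ e, a = e + 1 := ⟨a - 1, by omega⟩
        have h1 : (3:ℕ) ^ (e + 1) = 3 * 3 ^ e := by ring
        have h2 : (3:ℕ) ^ (c + 1) = 3 * 3 ^ c := by ring
        have h3 : (3:ℕ) ^ c ≤ 3 ^ e := pow3_le (by omega)
        exact Or.inr (Or.inr ⟨e, c, by omega, by omega⟩)
  · rintro (⟨a, rfl⟩ | ⟨a, b, hb, rfl⟩ | ⟨a, b, hb, rfl⟩)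
    · exact Or.inl ⟨a + 1, by ring⟩
    · exact Or.inr (Or.inl ⟨a + 1, b + 1, by omega, by ring⟩)
    · refine Or.inr (Or.inr ⟨a + 1, b + 1, by omega, ?_⟩)
      have h1 : (3:ℕ) ^ (a + 1) = 3 * 3 ^ a := by ring
      have h2 : (3:ℕ) ^ (b + 1) = 3 * 3 ^ b := by ring
      have h3 : (3:ℕ) ^ b ≤ 3 ^ a := pow3_le hb.le
      omega

lemma P3_mod3_two {n : ℕ} (h : P3 n) (hm : n % 3 = 2) : ∃ a, 1 ≤ a ∧ n = 3 ^ a - 1 := by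
  rcases h with ⟨a, rfl⟩ | ⟨a, b, hb, rfl⟩ | ⟨a, b, hb, rfl⟩
  · rcases Nat.eq_zero_or_pos a with rfl | ha
    · simp at hm
    · have := pow3_mod3 ha; omega
  · exfalso
    have ha := pow3_mod3 (show 1 ≤ a by omega)
    rcases Nat.eq_zero_or_pos b with rfl | hb0
    · simp at hm; omega
    · have := pow3_mod3 hb0; omega
  · have ha := pow3_mod3 (show 1 ≤ a by omega)
    have hle := pow3_le hb.le
    rcases Nat.eq_zero_or_pos b with rfl | hb0
    · exact ⟨a, by omega, by simp⟩
    · have := pow3_mod3 hb0; omega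

lemma P3_mod3_one_even {n : ℕ} (h : P3 n) (hm : n % 3 = 1) (he : n % 2 = 0) :
    ∃ a, 1 ≤ a ∧ n = 3 ^ a + 1 := by
  rcases h with ⟨a, rfl⟩ | ⟨a, b, hb, rfl⟩ | ⟨a, b, hb, rfl⟩
  · have := pow3_mod2 a; omega
  · have ha := pow3_mod3 (show 1 ≤ a by omega)
    rcases Nat.eq_zero_or_pos b with rfl | hb0
    · exact ⟨a, by omega, by simp⟩
    · have := pow3_mod3 hb0; omega
  · exfalso
    have ha := pow3_mod3 (show 1 ≤ a by omega)
    have hle := pow3_le hb.le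
    have hpos := pow3_pos a
    rcases Nat.eq_zero_or_pos b with rfl | hb0
    · simp at hm; omega
    · have := pow3_mod3 hb0; omega

/-- If `d` satisfies `d(1)=d(2)=d(3)=0` and the six recursive identities, then `d(n) = 0`
iff `n` is a power of 3, a sum of two powers of 3, or a difference of two powers of 3. -/
theorem stmt_6 (d : ℕ → ℕ)
    (h1 : d 1 = 0) (h2 : d 2 = 0) (h3 : d 3 = 0)
    (hrec : ∀ x : ℕ, 1 ≤ x →
      d (6 * x - 2) = 2 * d (2 * x - 1) + d (2 * x) ∧
      d (6 * x - 1) = d (2 * x - 1) + 2 * d (2 * x) + x ∧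
      d (6 * x) = 3 * d (2 * x) ∧
      d (6 * x + 1) = 2 * d (2 * x) + d (2 * x + 1) + x ∧
      d (6 * x + 2) = d (2 * x) + 2 * d (2 * x + 1) ∧
      d (6 * x + 3) = 3 * d (2 * x + 1)) :
    ∀ n : ℕ, 1 ≤ n →
      (d n = 0 ↔
        (∃ a : ℕ, n = 3 ^ a) ∨
        (∃ a b : ℕ, b < a ∧ n = 3 ^ a + 3 ^ b) ∨
        (∃ a b : ℕ, b < a ∧ n = 3 ^ a - 3 ^ b)) := by
  intro n
  induction n using Nat.strong_induction_on with
  | _ n ih =>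
  intro hn
  show d n = 0 ↔ P3 n
  rcases (by omega : n = 1 ∨ n = 2 ∨ n = 3 ∨ 4 ≤ n) with rfl | rfl | rfl | h4
  · exact ⟨fun _ => Or.inl ⟨0, rfl⟩, fun _ => h1⟩
  · exact ⟨fun _ => Or.inr (Or.inr ⟨1, 0, by norm_num⟩), fun _ => h2⟩
  · exact ⟨fun _ => Or.inl ⟨1, rfl⟩, fun _ => h3⟩
  rcases (by omega : n % 6 = 0 ∨ n % 6 = 1 ∨ n % 6 = 2 ∨ n % 6 = 3 ∨ n % 6 = 4 ∨ n % 6 = 5)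
    with hr | hr | hr | hr | hr | hr
  · -- n = 6x
    obtain ⟨x, hx1, rfl⟩ : ∃ x, 1 ≤ x ∧ n = 6 * x := ⟨n / 6, by omega, by omega⟩
    obtain ⟨-, -, hv, -, -, -⟩ := hrec x hx1
    have ihx : d (2 * x) = 0 ↔ P3 (2 * x) := ih (2 * x) (by omega) (by omega)
    rw [hv, show 6 * x = 3 * (2 * x) from by ring, P3_mul3 (by omega), ← ihx]
    omega
  · -- n = 6x + 1, d n ≥ x > 0 and ¬ P3 n
    obtain ⟨x, hx1, rfl⟩ : ∃ x, 1 ≤ x ∧ n = 6 * x + 1 := ⟨n / 6, by omega, by omega⟩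
    obtain ⟨-, -, -, hv, -, -⟩ := hrec x hx1
    constructor
    · intro h; omega
    · intro hp
      exfalso
      obtain ⟨a, ha⟩ := P3_odd hp (by omega)
      rcases Nat.eq_zero_or_pos a with rfl | ha0
      · simp at ha; omega
      · have := pow3_mod6 ha0; omega
  · -- n = 6x + 2
    obtain ⟨x, hx1, rfl⟩ : ∃ x, 1 ≤ x ∧ n = 6 * x + 2 := ⟨n / 6, by omega, by omega⟩
    obtain ⟨-, -, -, -, hv, -⟩ := hrec x hx1
    have ih1 := ih (2 * x) (by omega) (by omega)
    have ih2 := ih (2 * x + 1) (by omega) (by omega)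
    rw [hv]
    constructor
    · intro h
      have hp2 : P3 (2 * x + 1) := ih2.mp (by omega)
      obtain ⟨c, hc⟩ := P3_odd hp2 (by omega)
      have hc1 : 1 ≤ c := by
        rcases Nat.eq_zero_or_pos c with rfl | h
        · simp at hc; omega
        · exact h
      have hcp : (3:ℕ) ^ (c + 1) = 3 * 3 ^ c := by ring
      have := P3_pow_sub_one (show 1 ≤ c + 1 by omega)
      rwa [show (3:ℕ) ^ (c+1) - 1 = 6 * x + 2 from by omega] at this
    · intro hp
      obtain ⟨a, ha1, hae⟩ := P3_mod3_two hp (by omega)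
      obtain ⟨e, rfl⟩ : ∃ e, a = e + 1 := ⟨a - 1, by omega⟩
      have hcp : (3:ℕ) ^ (e + 1) = 3 * 3 ^ e := by ring
      have hpos := pow3_pos e
      have h3e : 2 * x + 1 = 3 ^ e := by omega
      have he1 : 1 ≤ e := by
        rcases Nat.eq_zero_or_pos e with rfl | h
        · simp at h3e; omega
        · exact h
      have e2 : d (2 * x + 1) = 0 := ih2.mpr (Or.inl ⟨e, h3e⟩)
      have e1 : d (2 * x) = 0 := by
        apply ih1.mpr
        have := P3_pow_sub_one he1
        rwa [show (3:ℕ) ^ e - 1 = 2 * x from by omega] at this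
      omega
  · -- n = 6x + 3
    obtain ⟨x, hx1, rfl⟩ : ∃ x, 1 ≤ x ∧ n = 6 * x + 3 := ⟨n / 6, by omega, by omega⟩
    obtain ⟨-, -, -, -, -, hv⟩ := hrec x hx1
    have ihx : d (2 * x + 1) = 0 ↔ P3 (2 * x + 1) := ih (2 * x + 1) (by omega) (by omega)
    rw [hv, show 6 * x + 3 = 3 * (2 * x + 1) from by ring, P3_mul3 (by omega), ← ihx]
    omega
  · -- n = 6x - 2  (x = (n+2)/6)
    obtain ⟨x, hx1, hn6⟩ : ∃ x, 1 ≤ x ∧ n = 6 * x - 2 := ⟨(n + 2) / 6, by omega, by omega⟩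
    obtain ⟨hv, -, -, -, -, -⟩ := hrec x hx1
    have ih1 := ih (2 * x - 1) (by omega) (by omega)
    have ih2 := ih (2 * x) (by omega) (by omega)
    rw [hn6, hv]
    constructor
    · intro h
      have hp1 : P3 (2 * x - 1) := ih1.mp (by omega)
      obtain ⟨c, hc⟩ := P3_odd hp1 (by omega)
      have hcp : (3:ℕ) ^ (c + 1) = 3 * 3 ^ c := by ring
      have heq : 6 * x - 2 = 3 ^ (c + 1) + 1 := by clear ih1 ih2 hp1; omega
      rw [heq]
      exact P3_pow_add_one (c + 1)
    · intro hp
      obtain ⟨a, ha1, hae⟩ := P3_mod3_one_even hp (by omega) (by omega)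
      obtain ⟨e, rfl⟩ : ∃ e, a = e + 1 := ⟨a - 1, by omega⟩
      have hcp : (3:ℕ) ^ (e + 1) = 3 * 3 ^ e := by ring
      have hpos := pow3_pos e
      have h3e : 2 * x - 1 = 3 ^ e := by clear ih1 ih2 hp; omega
      have e1 : d (2 * x - 1) = 0 := ih1.mpr (Or.inl ⟨e, h3e⟩)
      have e2 : d (2 * x) = 0 := by
        apply ih2.mpr
        have heq : 2 * x = 3 ^ e + 1 := by clear ih1 ih2 hp; omega
        rw [heq]
        exact P3_pow_add_one e
      clear ih1 ih2 hp
      omega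
  · -- n = 6x - 1, impossible
    obtain ⟨x, hx1, hn6⟩ : ∃ x, 1 ≤ x ∧ n = 6 * x - 1 := ⟨(n + 1) / 6, by omega, by omega⟩
    obtain ⟨-, hv, -, -, -, -⟩ := hrec x hx1
    rw [hn6]
    constructor
    · intro h; omega
    · intro hp
      exfalso
      obtain ⟨a, ha⟩ := P3_odd hp (by omega)
      rcases Nat.eq_zero_or_pos a with rfl | ha0
      · simp at ha; omega
      · have := pow3_mod6 ha0; omega
end

section
/- For real numbers A, B, C > 0, define F(A,B,C) as the infimum over all pairs of finite sequences (a_1,…,a_ℓ), (b_1,…,b_ℓ) of nonnegative reals with Σa_i = A, Σb_i = B, and a_i + b_i ≤ C for each i, of the quantity Σ_{i ≠ j} a_i b_j. Then F(A,B,C) is monotone nondecreasing in A and in B, and nonincreasing in C; and for any B ≥ B' > 0, (B'/B)·F(A,B,C) ≥ F(A,B',C). -/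
/-!
Rescaling the `a`-sequence by `c ∈ [0, 1]` and the `b`-sequence by `d ∈ [0, 1]` keeps every
constraint `aᵢ + bᵢ ≤ C` and multiplies the cross sum by `c d`, so
`F(cA, dB, C) ≤ c d · F(A, B, C)`. With `d = 1`, resp. `c = 1`, and `F ≥ 0`, this gives the
monotonicity in `A` and `B` and the scaling inequality; enlarging `C` only relaxes the constraints.
-/

/-- `F(A,B,C)`: the infimum, over pairs of finite sequences of nonnegative reals with
`Σaᵢ = A`, `Σbᵢ = B` and `aᵢ + bᵢ ≤ C`, of `Σ_{i≠j} aᵢ bⱼ`. -/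
noncomputable def Fcomp (A B C : ℝ) : ℝ :=
  sInf {t : ℝ | ∃ (ℓ : ℕ) (a b : Fin ℓ → ℝ),
    (∀ i, 0 ≤ a i) ∧ (∀ i, 0 ≤ b i) ∧ (∑ i, a i) = A ∧ (∑ i, b i) = B ∧
    (∀ i, a i + b i ≤ C) ∧
    t = ∑ i, ∑ j ∈ Finset.univ \ {i}, a i * b j}

open Finset

def FcompSet (A B C : ℝ) : Set ℝ :=
  {t : ℝ | ∃ (ℓ : ℕ) (a b : Fin ℓ → ℝ),
    (∀ i, 0 ≤ a i) ∧ (∀ i, 0 ≤ b i) ∧ (∑ i, a i) = A ∧ (∑ i, b i) = B ∧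
    (∀ i, a i + b i ≤ C) ∧
    t = ∑ i, ∑ j ∈ Finset.univ \ {i}, a i * b j}

theorem Fcomp_eq_sInf (A B C : ℝ) : Fcomp A B C = sInf (FcompSet A B C) := rfl

theorem nonneg_of_mem_FcompSet {A B C t : ℝ} (ht : t ∈ FcompSet A B C) : 0 ≤ t := by
  obtain ⟨ℓ, a, b, ha, hb, -, -, -, rfl⟩ := ht
  exact sum_nonneg fun i _ => sum_nonneg fun j _ => mul_nonneg (ha i) (hb j)

theorem FcompSet_bddBelow (A B C : ℝ) : BddBelow (FcompSet A B C) :=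
  ⟨0, fun _ => nonneg_of_mem_FcompSet⟩

theorem Fcomp_nonneg (A B C : ℝ) : 0 ≤ Fcomp A B C :=
  Real.sInf_nonneg fun _ => nonneg_of_mem_FcompSet

/-- Split `A` and `B` evenly into `n = ⌈(A + B)/C⌉₊ + 1` pieces. -/
theorem FcompSet_nonempty {A B C : ℝ} (hA : 0 ≤ A) (hB : 0 ≤ B) (hC : 0 < C) :
    (FcompSet A B C).Nonempty := by
  set n := ⌈(A + B) / C⌉₊ + 1
  have hn : (0 : ℝ) < n := by positivity
  have hsum (x : ℝ) : ∑ _ : Fin n, x / n = x := by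
    rw [sum_const, card_univ, Fintype.card_fin, nsmul_eq_mul, mul_div_cancel₀ _ hn.ne']
  have hABn : A + B ≤ n * C := by
    have := (div_le_iff₀ hC).mp (Nat.le_ceil ((A + B) / C))
    push_cast [n]
    nlinarith
  refine ⟨_, n, fun _ => A / n, fun _ => B / n, fun _ => by positivity, fun _ => by positivity,
    hsum A, hsum B, fun _ => ?_, rfl⟩
  rw [← add_div, div_le_iff₀ hn]
  linarith

theorem mul_mul_mem_FcompSet {A B C t c d : ℝ} (ht : t ∈ FcompSet A B C)
    (hc₀ : 0 ≤ c) (hc₁ : c ≤ 1) (hd₀ : 0 ≤ d) (hd₁ : d ≤ 1) :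
    c * d * t ∈ FcompSet (c * A) (d * B) C := by
  obtain ⟨ℓ, a, b, ha, hb, hsa, hsb, hab, rfl⟩ := ht
  refine ⟨ℓ, fun i => c * a i, fun i => d * b i, fun i => mul_nonneg hc₀ (ha i),
    fun i => mul_nonneg hd₀ (hb i), by rw [← mul_sum, hsa], by rw [← mul_sum, hsb],
    fun i => ?_, ?_⟩
  · have := add_le_add (mul_le_of_le_one_left (ha i) hc₁) (mul_le_of_le_one_left (hb i) hd₁)
    exact this.trans (hab i)
  · simp only [mul_sum]
    exact sum_congr rfl fun i _ => sum_congr rfl fun j _ => by ring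

theorem Fcomp_mul_mul_le {A B C c d : ℝ} (hne : (FcompSet A B C).Nonempty)
    (hc₀ : 0 ≤ c) (hc₁ : c ≤ 1) (hd₀ : 0 ≤ d) (hd₁ : d ≤ 1) :
    Fcomp (c * A) (d * B) C ≤ c * d * Fcomp A B C := by
  rw [Fcomp_eq_sInf, Fcomp_eq_sInf, ← smul_eq_mul (c * d),
    ← Real.sInf_smul_of_nonneg (by positivity)]
  refine csInf_le_csInf (FcompSet_bddBelow _ _ _) hne.smul_set ?_
  rintro _ ⟨t, ht, rfl⟩
  exact mul_mul_mem_FcompSet ht hc₀ hc₁ hd₀ hd₁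

theorem Fcomp_le_Fcomp_of_le_left {A A' B C : ℝ} (hA : 0 < A) (hAA' : A ≤ A') (hB : 0 ≤ B)
    (hC : 0 < C) : Fcomp A B C ≤ Fcomp A' B C := by
  have hA' : 0 < A' := hA.trans_le hAA'
  have hc₁ : A / A' ≤ 1 := (div_le_one hA').mpr hAA'
  calc Fcomp A B C = Fcomp (A / A' * A') (1 * B) C := by rw [div_mul_cancel₀ _ hA'.ne', one_mul]
    _ ≤ A / A' * 1 * Fcomp A' B C :=
      Fcomp_mul_mul_le (FcompSet_nonempty hA'.le hB hC) (by positivity) hc₁ zero_le_one le_rfl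
    _ ≤ Fcomp A' B C := by
      rw [mul_one]
      exact mul_le_of_le_one_left (Fcomp_nonneg _ _ _) hc₁

theorem Fcomp_le_div_mul_of_le_right {A B B' C : ℝ} (hne : (FcompSet A B C).Nonempty)
    (hB' : 0 < B') (hB'B : B' ≤ B) : Fcomp A B' C ≤ B' / B * Fcomp A B C := by
  have hB : 0 < B := hB'.trans_le hB'B
  calc Fcomp A B' C = Fcomp (1 * A) (B' / B * B) C := by rw [div_mul_cancel₀ _ hB.ne', one_mul]
    _ ≤ 1 * (B' / B) * Fcomp A B C :=
      Fcomp_mul_mul_le hne zero_le_one le_rfl (by positivity) ((div_le_one hB).mpr hB'B)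
    _ = B' / B * Fcomp A B C := by rw [one_mul]

theorem Fcomp_le_Fcomp_of_le_right {A B B' C : ℝ} (hA : 0 ≤ A) (hB : 0 < B) (hBB' : B ≤ B')
    (hC : 0 < C) : Fcomp A B C ≤ Fcomp A B' C := by
  have hB' : 0 < B' := hB.trans_le hBB'
  calc Fcomp A B C ≤ B / B' * Fcomp A B' C :=
        Fcomp_le_div_mul_of_le_right (FcompSet_nonempty hA hB'.le hC) hB hBB'
    _ ≤ Fcomp A B' C := mul_le_of_le_one_left (Fcomp_nonneg _ _ _) ((div_le_one hB').mpr hBB')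

theorem Fcomp_le_Fcomp_of_le_bound {A B C C' : ℝ} (hne : (FcompSet A B C).Nonempty)
    (hCC' : C ≤ C') : Fcomp A B C' ≤ Fcomp A B C := by
  refine csInf_le_csInf (FcompSet_bddBelow _ _ _) hne ?_
  rintro t ⟨ℓ, a, b, ha, hb, hsa, hsb, hab, rfl⟩
  exact ⟨ℓ, a, b, ha, hb, hsa, hsb, fun i => (hab i).trans hCC', rfl⟩

/-- `F(A,B,C)` is nondecreasing in `A` and in `B`, nonincreasing in `C`, and satisfies the
scaling inequality `(B'/B)·F(A,B,C) ≥ F(A,B',C)` for `0 < B' ≤ B`. -/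
theorem stmt_9 (A B C : ℝ) (hA : 0 < A) (hB : 0 < B) (hC : 0 < C) :
    (∀ A' : ℝ, A ≤ A' → Fcomp A B C ≤ Fcomp A' B C) ∧
    (∀ B' : ℝ, B ≤ B' → Fcomp A B C ≤ Fcomp A B' C) ∧
    (∀ C' : ℝ, C ≤ C' → Fcomp A B C' ≤ Fcomp A B C) ∧
    (∀ B' : ℝ, 0 < B' → B' ≤ B → Fcomp A B' C ≤ (B' / B) * Fcomp A B C) := by
  have hne := FcompSet_nonempty hA.le hB.le hC
  exact ⟨fun _ hAA' => Fcomp_le_Fcomp_of_le_left hA hAA' hB.le hC,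
    fun _ hBB' => Fcomp_le_Fcomp_of_le_right hA.le hB hBB' hC,
    fun _ hCC' => Fcomp_le_Fcomp_of_le_bound hne hCC',
    fun _ hB' hB'B => Fcomp_le_div_mul_of_le_right hne hB' hB'B⟩
end

section
/- Let G be a k-partite graph (vertex set partitioned into k parts with all edges between distinct parts) with e edges. Then the number of copies of K_k in G (cliques with one vertex in each part) is at most (e / C(k,2))^{k/2}. -/
/-!
Encode a transversal copy of `K_k` as the map `f : Fin k → V` sending `i` to its vertex in part
`i`. For any finite set `S` of maps `Fin n → α`, a Loomis–Whitney-type inequality bounds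
`|S| ^ (n - 1)` by the product of the sizes of the `C(n, 2)` projections of `S` onto pairs of
coordinates. It is proved by induction on `n`: fibre `S` over the last coordinate, bound each
fibre both by the induction hypothesis and by the product of its one-coordinate projections, and
sum over the fibres with Hölder's inequality. For transversal cliques the projections onto the
pairs `i < j` are disjoint sets of edges, so by AM–GM their product is at most
`(e / C(k, 2)) ^ C(k, 2)`, and `C(k, 2) / (k - 1) = k / 2`.
-/

open Finset SimpleGraph
open scoped ENNReal

open MeasureTheory in
theorem ENNReal.sum_prod_rpow_le_prod_sum_rpow {α ι : Type*} (A : Finset α) (s : Finset ι)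
    (f : ι → α → ℝ≥0∞) {p : ι → ℝ} (hp : ∑ i ∈ s, p i = 1) (hp₀ : ∀ i ∈ s, 0 ≤ p i) :
    ∑ a ∈ A, ∏ i ∈ s, f i a ^ p i ≤ ∏ i ∈ s, (∑ a ∈ A, f i a) ^ p i := by
  let _ : MeasurableSpace α := ⊤
  simpa [lintegral_finsetSum_measure, lintegral_dirac' _ measurable_from_top] using
    ENNReal.lintegral_prod_norm_pow_le (μ := ∑ a ∈ A, Measure.dirac a) s
      (fun _ _ => measurable_from_top.aemeasurable) hp hp₀

theorem Fin.prod_prod_Iio_succ {M : Type*} [CommMonoid M] {n : ℕ}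
    (g : Fin (n + 1) → Fin (n + 1) → M) :
    ∏ j, ∏ i ∈ Iio j, g i j =
      (∏ j : Fin n, ∏ i ∈ Iio j, g i.castSucc j.castSucc) * ∏ i : Fin n, g i.castSucc (last n) := by
  simp [Fin.prod_univ_castSucc, ← Fin.map_castSuccEmb_Iio, Fin.Iio_last_eq_map, prod_map]

namespace Finset

variable {α : Type*} [DecidableEq α] {n : ℕ}

def pairImage (S : Finset (Fin n → α)) (i j : Fin n) : Finset (α × α) :=
  S.image fun f => (f i, f j)

lemma card_image_init_filter_last (S : Finset (Fin (n + 1) → α)) (a : α) :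
    #({f ∈ S | f (Fin.last n) = a}.image Fin.init) = #{f ∈ S | f (Fin.last n) = a} := by
  refine card_image_of_injOn fun f hf g hg hfg => ?_
  simp only [coe_filter, Set.mem_ofPred_eq] at hf hg
  rw [← Fin.snoc_init_self f, ← Fin.snoc_init_self g, hfg, hf.2, hg.2]

lemma card_filter_last_pow_le (ih : ∀ T : Finset (Fin n → α),
      #T ^ (n - 1) ≤ ∏ j : Fin n, ∏ i ∈ Iio j, #(T.pairImage i j))
    (S : Finset (Fin (n + 1) → α)) (a : α) :
    #{f ∈ S | f (Fin.last n) = a} ^ (n - 1) ≤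
      ∏ j : Fin n, ∏ i ∈ Iio j, #(S.pairImage i.castSucc j.castSucc) := by
  rw [← card_image_init_filter_last]
  refine (ih _).trans (prod_le_prod' fun j _ => prod_le_prod' fun i _ => card_le_card ?_)
  simp only [pairImage, image_image]
  exact image_subset_image (filter_subset _ _)

lemma card_filter_last_le (S : Finset (Fin (n + 1) → α)) (a : α) :
    #{f ∈ S | f (Fin.last n) = a} ≤
      ∏ i : Fin n, #{x ∈ S.pairImage i.castSucc (Fin.last n) | x.2 = a} := by
  rw [← card_image_init_filter_last]
  calc _ ≤ #(Fintype.piFinset fun i : Fin n =>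
          {x ∈ S.pairImage i.castSucc (Fin.last n) | x.2 = a}.image Prod.fst) := by
        refine card_le_card fun g hg => Fintype.mem_piFinset.2 fun i => ?_
        obtain ⟨f, hf, rfl⟩ := mem_image.1 hg
        rw [mem_filter] at hf
        exact mem_image.2 ⟨_, mem_filter.2 ⟨mem_image_of_mem _ hf.1, hf.2⟩, rfl⟩
    _ ≤ _ := by
        rw [Fintype.card_piFinset]
        exact prod_le_prod' fun i _ => card_image_le

lemma sum_card_filter_snd (S : Finset (Fin (n + 1) → α)) (i : Fin n) :
    ∑ a ∈ S.image (· (Fin.last n)), #{x ∈ S.pairImage i.castSucc (Fin.last n) | x.2 = a} =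
      #(S.pairImage i.castSucc (Fin.last n)) := by
  refine (card_eq_sum_card_fiberwise fun x hx => ?_).symm
  obtain ⟨f, hf, rfl⟩ := mem_image.1 hx
  exact mem_image_of_mem _ hf

lemma card_pow_le_prod_card_pairImage_succ (hn : 0 < n) (ih : ∀ T : Finset (Fin n → α),
      #T ^ (n - 1) ≤ ∏ j : Fin n, ∏ i ∈ Iio j, #(T.pairImage i j))
    (S : Finset (Fin (n + 1) → α)) :
    #S ^ n ≤ ∏ j : Fin (n + 1), ∏ i ∈ Iio j, #(S.pairImage i j) := by
  set A := S.image (· (Fin.last n))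
  set E := ∏ j : Fin n, ∏ i ∈ Iio j, #(S.pairImage i.castSucc j.castSucc)
  set e : Fin n → ℕ := fun i => #(S.pairImage i.castSucc (Fin.last n))
  set d : Fin n → α → ℕ := fun i a => #{x ∈ S.pairImage i.castSucc (Fin.last n) | x.2 = a}
  have hn' : (0 : ℝ) < n := by exact_mod_cast hn
  have hfiber (a : α) : (#{f ∈ S | f (Fin.last n) = a} : ℝ≥0∞) ≤
      (E : ℝ≥0∞) ^ (n : ℝ)⁻¹ * ∏ i, (d i a : ℝ≥0∞) ^ (n : ℝ)⁻¹ := by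
    rw [ENNReal.prod_rpow_of_nonneg (by positivity),
      ← ENNReal.mul_rpow_of_nonneg _ _ (by positivity), ENNReal.le_rpow_inv_iff hn',
      ENNReal.rpow_natCast]
    norm_cast
    rw [← pow_sub_one_mul hn.ne']
    exact Nat.mul_le_mul (card_filter_last_pow_le ih S a) (card_filter_last_le S a)
  suffices (#S : ℝ≥0∞) ≤ ((E * ∏ i, e i : ℕ) : ℝ≥0∞) ^ (n : ℝ)⁻¹ by
    rwa [Fin.prod_prod_Iio_succ, ← Nat.cast_le (α := ℝ≥0∞), Nat.cast_pow, ← ENNReal.rpow_natCast,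
      ← ENNReal.le_rpow_inv_iff hn']
  calc (#S : ℝ≥0∞) = ∑ a ∈ A, (#{f ∈ S | f (Fin.last n) = a} : ℝ≥0∞) := by
        exact_mod_cast card_eq_sum_card_image _ S
    _ ≤ ∑ a ∈ A, (E : ℝ≥0∞) ^ (n : ℝ)⁻¹ * ∏ i, (d i a : ℝ≥0∞) ^ (n : ℝ)⁻¹ :=
        sum_le_sum fun a _ => hfiber a
    _ ≤ (E : ℝ≥0∞) ^ (n : ℝ)⁻¹ * ∏ i, (∑ a ∈ A, (d i a : ℝ≥0∞)) ^ (n : ℝ)⁻¹ := by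
        rw [← mul_sum]
        gcongr
        exact ENNReal.sum_prod_rpow_le_prod_sum_rpow _ _ _ (by simp [hn'.ne'])
          fun _ _ => by positivity
    _ = ((E * ∏ i, e i : ℕ) : ℝ≥0∞) ^ (n : ℝ)⁻¹ := by
        push_cast [d, e, ← sum_card_filter_snd S]
        rw [ENNReal.mul_rpow_of_nonneg _ _ (by positivity),
          ENNReal.prod_rpow_of_nonneg (by positivity)]

theorem card_pow_le_prod_card_pairImage :
    ∀ {n : ℕ} (S : Finset (Fin n → α)), #S ^ (n - 1) ≤ ∏ j, ∏ i ∈ Iio j, #(S.pairImage i j)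
  | 0, _ => by simp
  | 1, _ => by simp [Iio_eq_empty.2 (Subsingleton.isMin _)]
  | n + 2, S =>
    card_pow_le_prod_card_pairImage_succ n.succ_pos card_pow_le_prod_card_pairImage S

end Finset

theorem Real.le_div_card_rpow_of_pow_le_prod {ι : Type*} (s : Finset ι) {x : ι → ℝ}
    (hx : ∀ i ∈ s, 0 ≤ x i) (hs : s.Nonempty) {t e : ℝ} (ht : 0 ≤ t) {m : ℕ} (hm : m ≠ 0)
    (hprod : t ^ m ≤ ∏ i ∈ s, x i) (hsum : ∑ i ∈ s, x i ≤ e) :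
    t ≤ (e / #s) ^ ((#s : ℝ) / m) := by
  have hcard : (0 : ℝ) < #s := by exact_mod_cast hs.card_pos
  have hprod₀ : 0 ≤ ∏ i ∈ s, x i := prod_nonneg hx
  have amgm : (∏ i ∈ s, x i) ^ (#s : ℝ)⁻¹ ≤ e / #s := by
    have := Real.geom_mean_le_arith_mean s (fun _ => 1) x (fun _ _ => zero_le_one)
      (by simpa using hs.card_pos) hx
    simp only [Real.rpow_one, sum_const, nsmul_eq_mul, mul_one, one_mul] at this
    exact this.trans (by gcongr)
  calc t = (t ^ m) ^ (m : ℝ)⁻¹ := by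
        rw [← Real.rpow_natCast, ← Real.rpow_mul ht, mul_inv_cancel₀ (by exact_mod_cast hm),
          Real.rpow_one]
    _ ≤ (∏ i ∈ s, x i) ^ (m : ℝ)⁻¹ := by gcongr
    _ = ((∏ i ∈ s, x i) ^ (#s : ℝ)⁻¹) ^ ((#s : ℝ) / m) := by
        rw [← Real.rpow_mul hprod₀, ← div_eq_inv_mul, div_div_cancel_left' hcard.ne']
    _ ≤ (e / #s) ^ ((#s : ℝ) / m) := by gcongr

theorem Sym2.injOn_mk_of_lt {α β : Type*} [Preorder β] (p : α → β) :
    Set.InjOn (fun x : α × α => s(x.1, x.2)) {x | p x.1 < p x.2} := by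
  rintro ⟨a, b⟩ hab ⟨c, d⟩ hcd h
  rcases Sym2.eq_iff.1 h with ⟨rfl, rfl⟩ | ⟨rfl, rfl⟩
  · rfl
  · exact absurd hab (lt_asymm hcd)

namespace SimpleGraph

variable {V : Type*} [Fintype V] (G : SimpleGraph V) [DecidableRel G.Adj] {k : ℕ} (p : V → Fin k)

def transversalCliqueMaps : Finset (Fin k → V) :=
  {f | (∀ i, p (f i) = i) ∧ ∀ i j, i ≠ j → G.Adj (f i) (f j)}

variable [DecidableEq V] {G p}

lemma exists_mem_transversalCliqueMaps {s : Finset V} (hs : G.IsNClique k s)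
    (hcover : ∀ i, ∃ v ∈ s, p v = i) : ∃ f ∈ G.transversalCliqueMaps p, univ.image f = s := by
  choose f hfs hpf using hcover
  have hinj : Function.Injective f := Function.LeftInverse.injective hpf
  refine ⟨f, mem_filter.2 ⟨mem_univ _, hpf, fun i j hij =>
    hs.isClique (hfs i) (hfs j) (hinj.ne hij)⟩,
    eq_of_subset_of_card_le (image_subset_iff.2 fun i _ => hfs i) ?_⟩
  rw [card_image_of_injective _ hinj, card_univ, Fintype.card_fin, hs.card_eq]

lemma mem_pairImage_transversalCliqueMaps {i j : Fin k} {x : V × V}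
    (hx : x ∈ (G.transversalCliqueMaps p).pairImage i j) :
    p x.1 = i ∧ p x.2 = j ∧ (i ≠ j → G.Adj x.1 x.2) := by
  obtain ⟨f, hf, rfl⟩ := mem_image.1 hx
  obtain ⟨-, hp, hadj⟩ := mem_filter.1 hf
  exact ⟨hp i, hp j, hadj i j⟩

variable (G p)

lemma ncard_transversal_cliques_le :
    {s : Finset V | G.IsNClique k s ∧ ∀ i, ∃ v ∈ s, p v = i}.ncard ≤
      #(G.transversalCliqueMaps p) := by
  calc _ ≤ ((fun f => univ.image f) '' (G.transversalCliqueMaps p : Set (Fin k → V))).ncard := by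
        refine Set.ncard_le_ncard (fun s ⟨hs, hcover⟩ => ?_) ((finite_toSet _).image _)
        obtain ⟨f, hf, rfl⟩ := exists_mem_transversalCliqueMaps hs hcover
        exact ⟨f, hf, rfl⟩
    _ ≤ _ := by
        rw [← Set.ncard_coe_finset (G.transversalCliqueMaps p)]
        exact Set.ncard_image_le (finite_toSet _)

lemma sum_card_pairImage_transversalCliqueMaps_le :
    ∑ j, ∑ i ∈ Iio j, #((G.transversalCliqueMaps p).pairImage i j) ≤ #G.edgeFinset := by
  set X := fun x : (_ : Fin k) × Fin k => (G.transversalCliqueMaps p).pairImage x.2 x.1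
  have hX {x : V × V} (hx : x ∈ (univ.sigma Iio).biUnion X) : p x.1 < p x.2 ∧ G.Adj x.1 x.2 := by
    obtain ⟨⟨j, i⟩, hji, hx⟩ := mem_biUnion.1 hx
    obtain ⟨rfl, rfl, hadj⟩ := mem_pairImage_transversalCliqueMaps hx
    have hlt := mem_Iio.1 (mem_sigma.1 hji).2
    exact ⟨hlt, hadj hlt.ne⟩
  rw [← sum_sigma univ Iio fun x => #(X x), ← card_biUnion]
  · exact card_le_card_of_injOn _ (fun x hx => mem_edgeFinset.2 (hX hx).2)
      ((Sym2.injOn_mk_of_lt p).mono fun x hx => (hX hx).1)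
  · rintro ⟨j, i⟩ - ⟨j', i'⟩ - hne
    refine Finset.disjoint_left.2 fun x hx hx' => hne ?_
    obtain ⟨rfl, rfl, -⟩ := mem_pairImage_transversalCliqueMaps hx
    obtain ⟨rfl, rfl, -⟩ := mem_pairImage_transversalCliqueMaps hx'
    rfl

end SimpleGraph

theorem stmt_12_general (V : Type*) [Fintype V] (k : ℕ) (hk : 2 ≤ k)
    (G : SimpleGraph V) (p : V → Fin k) :
    (Set.ncard {s : Finset V | G.IsNClique k s ∧ ∀ i : Fin k, ∃ v ∈ s, p v = i} : ℝ) ≤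
      ((G.edgeSet.ncard : ℝ) / (Nat.choose k 2 : ℝ)) ^ ((k : ℝ) / 2) := by
  classical
  set S := G.transversalCliqueMaps p
  set P := univ.sigma fun j : Fin k => Iio j
  have hP : P.Nonempty := ⟨⟨⟨1, by omega⟩, ⟨0, by omega⟩⟩, by simp [P]⟩
  have hcard : #P = k.choose 2 := by
    simp [P, card_sigma, Fin.sum_univ_eq_sum_range (fun i => i), sum_range_id,
      Nat.choose_two_right]
  have hexp : ((k.choose 2 : ℕ) : ℝ) / ((k - 1 : ℕ) : ℝ) = k / 2 := by
    have : (k : ℝ) - 1 ≠ 0 := by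
      have : (2 : ℝ) ≤ k := by exact_mod_cast hk
      linarith
    rw [Nat.cast_choose_two, Nat.cast_sub (by omega), Nat.cast_one]
    field_simp
  have hprod : (#S : ℝ) ^ (k - 1) ≤ ∏ x ∈ P, (#(S.pairImage x.2 x.1) : ℝ) := by
    rw [prod_sigma]
    exact_mod_cast card_pow_le_prod_card_pairImage S
  have hsum : ∑ x ∈ P, (#(S.pairImage x.2 x.1) : ℝ) ≤ G.edgeSet.ncard := by
    rw [sum_sigma, ← coe_edgeFinset, Set.ncard_coe_finset]
    exact_mod_cast G.sum_card_pairImage_transversalCliqueMaps_le p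
  have key := Real.le_div_card_rpow_of_pow_le_prod P (fun _ _ => by positivity) hP
    (Nat.cast_nonneg _) (by omega) hprod hsum
  rw [hcard, hexp] at key
  exact (Nat.cast_le.2 (G.ncard_transversal_cliques_le p)).trans key

/-- If `G` is a `k`-partite graph with `e` edges, the number of transversal copies of `K_k`
in `G` is at most `(e / C(k,2))^{k/2}`. -/
theorem stmt_12 (V : Type*) [Fintype V] (k : ℕ) (hk : 2 ≤ k)
    (G : SimpleGraph V) (p : V → Fin k)
    (hpart : ∀ a b, G.Adj a b → p a ≠ p b) :
    (Set.ncard {s : Finset V | G.IsNClique k s ∧ ∀ i : Fin k, ∃ v ∈ s, p v = i} : ℝ) ≤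
      ((G.edgeSet.ncard : ℝ) / (Nat.choose k 2 : ℝ)) ^ ((k : ℝ) / 2) :=
  stmt_12_general V k hk G p
end

section
/- Let χ be an edge coloring of K_n with all color classes tripartite, attaining the maximum number of monochromatic triangles among such colorings, and suppose that some coloring achieves at least g_3(n)+1 monochromatic triangles while every tripartite coloring of K_{n−1} has at most g_3(n−1) monochromatic triangles. Then every vertex v of K_n lies in at least g_3(n) − g_3(n−1) + 1 monochromatic triangles, and moreover Σ_{i≥1} bip(d^i(v)) ≥ g_3(n) − g_3(n−1) + 1, where (d^1(v), d^2(v), …) is the degree sequence of v and bip(x) = ⌊x/2⌋⌈x/2⌉. -/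
/-- A tripartite edge coloring of `K_n`: symmetric, and each color class is 3-partite. -/
def IsTripartiteColoring (n : ℕ) (χ : Fin n → Fin n → ℕ) : Prop :=
  (∀ i j, χ i j = χ j i) ∧
  ∀ c : ℕ, ∃ p : Fin n → Fin 3, ∀ i j : Fin n, i ≠ j → χ i j = c → p i ≠ p j

/-- The set of monochromatic triangles of a coloring. -/
def monoTriangles (n : ℕ) (χ : Fin n → Fin n → ℕ) : Set (Finset (Fin n)) :=
  {s | ∃ x y z : Fin n, x ≠ y ∧ x ≠ z ∧ y ≠ z ∧ s = {x, y, z} ∧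
    χ x y = χ y z ∧ χ y z = χ x z}

/-- `bip x = ⌊x/2⌋ ⌈x/2⌉`. -/
def bip (x : ℕ) : ℕ := (x / 2) * ((x + 1) / 2)

lemma mul_le_bip (a b : ℕ) : a * b ≤ bip (a + b) := by
  unfold bip
  rcases Nat.even_or_odd (a + b) with ⟨k, hk⟩ | ⟨k, hk⟩
  · have h1 : (a + b) / 2 = k := by omega
    have h2 : (a + b + 1) / 2 = k := by omega
    rw [h1, h2]; zify
    nlinarith [sq_nonneg ((a:ℤ) - b), (by exact_mod_cast hk : (a:ℤ) + b = k + k)]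
  · have h1 : (a + b) / 2 = k := by omega
    have h2 : (a + b + 1) / 2 = k + 1 := by omega
    rw [h1, h2]; zify
    nlinarith [sq_nonneg ((a:ℤ) - b), (by exact_mod_cast hk : (a:ℤ) + b = 2 * k + 1)]

lemma fin3 : ∀ q : Fin 3, ∃ a b : Fin 3, a ≠ b ∧ a ≠ q ∧ b ≠ q ∧
    ∀ r : Fin 3, r ≠ q → r = a ∨ r = b := by decide

open Classical in
lemma triangles_at_vertex_le (n : ℕ) (χ : Fin n → Fin n → ℕ)
    (hχ : IsTripartiteColoring n χ) (v : Fin n) :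
    Set.ncard {s | s ∈ monoTriangles n χ ∧ v ∈ s} ≤
      ∑ c ∈ (Finset.univ.erase v).image (fun u => χ v u), bip (colorCount n χ v c) := by
  classical
  set C := (Finset.univ.erase v).image (fun u => χ v u) with hC
  set Etc : ℕ → Finset (Finset (Fin n)) := fun c => Finset.univ.filter
    (fun t => ∃ x y : Fin n, x ≠ y ∧ t = {x, y} ∧ x ≠ v ∧ y ≠ v ∧
      χ v x = c ∧ χ v y = c ∧ χ x y = c) with hEtc
  set A : Set (Finset (Fin n)) := {s | s ∈ monoTriangles n χ ∧ v ∈ s} with hA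
  have hinj : Set.InjOn (fun s => Finset.erase s v) A := by
    intro s hs t ht hst
    simp only at hst
    have h2 : insert v (s.erase v) = insert v (t.erase v) := by rw [hst]
    rwa [Finset.insert_erase hs.2, Finset.insert_erase ht.2] at h2
  have hsym := hχ.1
  have himg : (fun s => Finset.erase s v) '' A ⊆ ↑(C.biUnion Etc) := by
    rintro t ⟨s, ⟨⟨x, y, z, hxy, hxz, hyz, hs, h1, h2⟩, hvs⟩, rfl⟩
    subst hs
    simp only [Finset.coe_biUnion, Set.mem_iUnion, Finset.mem_coe]
    have hvmem := hvs
    simp only [Finset.mem_insert, Finset.mem_singleton] at hvmem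
    have key : ∃ x' y' : Fin n, x' ≠ y' ∧ ({x, y, z} : Finset (Fin n)).erase v = {x', y'} ∧
        x' ≠ v ∧ y' ≠ v ∧ χ v x' = χ v y' ∧ χ v y' = χ x' y' := by
      rcases hvmem with rfl | rfl | rfl
      · refine ⟨y, z, hyz, ?_, Ne.symm hxy, Ne.symm hxz, h1.trans h2, h2.symm⟩
        ext a
        simp only [Finset.mem_erase, Finset.mem_insert, Finset.mem_singleton]
        aesop
      · refine ⟨x, z, hxz, ?_, hxy, Ne.symm hyz, (hsym v x).trans h1, h2⟩
        ext a
        simp only [Finset.mem_erase, Finset.mem_insert, Finset.mem_singleton]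
        aesop
      · refine ⟨x, y, hxy, ?_, hxz, hyz, ?_, ?_⟩
        · ext a
          simp only [Finset.mem_erase, Finset.mem_insert, Finset.mem_singleton]
          aesop
        · rw [hsym v x, hsym v y]; exact h2.symm
        · rw [hsym v y]; exact h1.symm
    obtain ⟨x', y', hxy', ht, hx'v, hy'v, e1, e2⟩ := key
    refine ⟨χ v x', ?_, ?_⟩
    · simp only [hC, Finset.mem_image, Finset.mem_erase]
      exact ⟨x', ⟨hx'v, Finset.mem_univ x'⟩, rfl⟩
    · simp only [hEtc, Finset.mem_filter, Finset.mem_univ, true_and]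
      exact ⟨x', y', hxy', ht, hx'v, hy'v, rfl, e1.symm, by rw [← e2, e1]⟩
  -- from injection to cardinality bound
  have step1 : A.ncard ≤ (C.biUnion Etc).card := by
    calc A.ncard = ((fun s => Finset.erase s v) '' A).ncard :=
          (Set.ncard_image_of_injOn hinj).symm
      _ ≤ (↑(C.biUnion Etc) : Set (Finset (Fin n))).ncard :=
          Set.ncard_le_ncard himg (Finset.finite_toSet _)
      _ = (C.biUnion Etc).card := Set.ncard_coe_finset _
  have step2 : (C.biUnion Etc).card ≤ ∑ c ∈ C, (Etc c).card := Finset.card_biUnion_le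
  have step3 : ∀ c ∈ C, (Etc c).card ≤ bip (colorCount n χ v c) := by
    intro c _
    obtain ⟨p, hp⟩ := hχ.2 c
    obtain ⟨a, b, hab, haq, hbq, hcover⟩ := fin3 (p v)
    set N := Finset.univ.filter (fun u => u ≠ v ∧ χ v u = c) with hN
    set A' := N.filter (fun u => p u = a) with hA'
    set B' := N.filter (fun u => p u = b) with hB'
    have hmemN : ∀ u, u ∈ N ↔ (u ≠ v ∧ χ v u = c) := by
      intro u; simp [hN]
    have hpne : ∀ u ∈ N, p u ≠ p v := by
      intro u hu
      obtain ⟨huv, huc⟩ := (hmemN u).mp hu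
      exact fun h => hp v u (Ne.symm huv) huc (h.symm)
    have hsplit : A'.card + B'.card = N.card := by
      have : B' = N.filter (fun u => ¬ p u = a) := by
        apply Finset.filter_congr
        intro u hu
        have := hcover (p u) (hpne u hu)
        constructor
        · intro h h'; rw [h'] at h; exact hab h
        · intro h; rcases this with h' | h'
          · exact absurd h' h
          · exact h'
      rw [this]
      exact Finset.card_filter_add_card_filter_not _
    have hsub : Etc c ⊆ (A' ×ˢ B').image (fun q => ({q.1, q.2} : Finset (Fin n))) := by
      intro t ht
      simp only [hEtc, Finset.mem_filter, Finset.mem_univ, true_and] at ht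
      obtain ⟨x, y, hxy, rfl, hxv, hyv, hvx, hvy, hxyc⟩ := ht
      have hxN : x ∈ N := (hmemN x).mpr ⟨hxv, hvx⟩
      have hyN : y ∈ N := (hmemN y).mpr ⟨hyv, hvy⟩
      have hpxy : p x ≠ p y := hp x y hxy hxyc
      rcases hcover (p x) (hpne x hxN) with hx | hx <;>
        rcases hcover (p y) (hpne y hyN) with hy | hy
      · exact absurd (hx.trans hy.symm) hpxy
      · refine Finset.mem_image.mpr ⟨(x, y), Finset.mem_product.mpr
          ⟨Finset.mem_filter.mpr ⟨hxN, hx⟩, Finset.mem_filter.mpr ⟨hyN, hy⟩⟩, rfl⟩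
      · refine Finset.mem_image.mpr ⟨(y, x), Finset.mem_product.mpr
          ⟨Finset.mem_filter.mpr ⟨hyN, hy⟩, Finset.mem_filter.mpr ⟨hxN, hx⟩⟩, ?_⟩
        simp [Finset.pair_comm]
      · exact absurd (hx.trans hy.symm) hpxy
    calc (Etc c).card ≤ ((A' ×ˢ B').image (fun q => ({q.1, q.2} : Finset (Fin n)))).card :=
          Finset.card_le_card hsub
      _ ≤ (A' ×ˢ B').card := Finset.card_image_le
      _ = A'.card * B'.card := Finset.card_product _ _
      _ ≤ bip (A'.card + B'.card) := mul_le_bip _ _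
      _ = bip (colorCount n χ v c) := by rw [hsplit]; rfl
  calc A.ncard ≤ (C.biUnion Etc).card := step1
    _ ≤ ∑ c ∈ C, (Etc c).card := step2
    _ ≤ ∑ c ∈ C, bip (colorCount n χ v c) := Finset.sum_le_sum step3

open Classical in
lemma restrict_coloring (m : ℕ) (hm : 0 < m) (χ : Fin (m+1) → Fin (m+1) → ℕ)
    (hχ : IsTripartiteColoring (m+1) χ) (v : Fin (m+1)) :
    ∃ χ' : Fin m → Fin m → ℕ, IsTripartiteColoring m χ' ∧
      Set.ncard {s | s ∈ monoTriangles (m+1) χ ∧ v ∉ s} ≤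
        Set.ncard (monoTriangles m χ') := by
  classical
  refine ⟨fun i j => χ (v.succAbove i) (v.succAbove j),
    ⟨fun i j => hχ.1 _ _, ?_⟩, ?_⟩
  · intro c
    obtain ⟨p, hp⟩ := hχ.2 c
    exact ⟨fun i => p (v.succAbove i), fun i j hij hc =>
      hp _ _ (fun h => hij (Fin.succAbove_right_injective h)) hc⟩
  · set χ' : Fin m → Fin m → ℕ := fun i j => χ (v.succAbove i) (v.succAbove j) with hχ'
    set g : Fin (m+1) → Fin m := fun u =>
      if h : u ≠ v then (Fin.exists_succAbove_eq h).choose else ⟨0, hm⟩ with hgdef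
    have hg : ∀ u : Fin (m+1), u ≠ v → v.succAbove (g u) = u := by
      intro u hu
      simp only [hgdef, dif_pos hu]
      exact (Fin.exists_succAbove_eq hu).choose_spec
    set B : Set (Finset (Fin (m+1))) := {s | s ∈ monoTriangles (m+1) χ ∧ v ∉ s} with hB
    set F : Finset (Fin (m+1)) → Finset (Fin m) := fun s => s.image g with hF
    have hrecover : ∀ s ∈ B, (F s).image (v.succAbove) = s := by
      intro s hs
      rw [hF]
      simp only
      rw [Finset.image_image]
      have : ∀ u ∈ s, (v.succAbove ∘ g) u = u := by
        intro u hu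
        have huv : u ≠ v := fun h => hs.2 (h ▸ hu)
        exact hg u huv
      calc s.image (v.succAbove ∘ g) = s.image id := Finset.image_congr this
        _ = s := Finset.image_id
    have hinj : Set.InjOn F B := by
      intro s hs t ht hst
      rw [← hrecover s hs, ← hrecover t ht, hst]
    have himg : F '' B ⊆ monoTriangles m χ' := by
      rintro t ⟨s, hs, rfl⟩
      obtain ⟨⟨x, y, z, hxy, hxz, hyz, hseq, h1, h2⟩, hvs⟩ := hs
      subst hseq
      have hxv : x ≠ v := fun h => hvs (h ▸ Finset.mem_insert_self x {y, z})
      have hyv : y ≠ v := fun h => hvs (h ▸ Finset.mem_insert_of_mem (Finset.mem_insert_self y {z}))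
      have hzv : z ≠ v := fun h => hvs (h ▸ Finset.mem_insert_of_mem
        (Finset.mem_insert_of_mem (Finset.mem_singleton_self z)))
      refine ⟨g x, g y, g z, ?_, ?_, ?_, ?_, ?_, ?_⟩
      · exact fun h => hxy (by rw [← hg x hxv, ← hg y hyv, h])
      · exact fun h => hxz (by rw [← hg x hxv, ← hg z hzv, h])
      · exact fun h => hyz (by rw [← hg y hyv, ← hg z hzv, h])
      · simp [hF, Finset.image_insert]
      · show χ _ _ = χ _ _
        rw [hg x hxv, hg y hyv, hg z hzv]
        exact h1
      · show χ _ _ = χ _ _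
        rw [hg x hxv, hg y hyv, hg z hzv]
        exact h2
    calc B.ncard = (F '' B).ncard := (Set.ncard_image_of_injOn hinj).symm
      _ ≤ (monoTriangles m χ').ncard := Set.ncard_le_ncard himg (Set.toFinite _)

/-- If `χ` is a tripartite coloring of `K_n` maximizing the number of monochromatic
triangles, some tripartite coloring has at least `g₃(n)+1` monochromatic triangles, and every
tripartite coloring of `K_{n−1}` has at most `g₃(n−1)`, then every vertex lies in at least
`g₃(n) − g₃(n−1) + 1` monochromatic triangles, and `Σ_c bip(|N_c(v)|) ≥ g₃(n) − g₃(n−1) + 1`. -/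
theorem stmt_14 (n : ℕ) (g3 : ℕ → ℕ)
    (hg0 : ∀ m, m < 3 → g3 m = 0)
    (hgub : ∀ m, 3 ≤ m → ∀ s1 s2 s3 : ℕ, 0 < s1 → 0 < s2 → 0 < s3 →
      s1 + s2 + s3 = m → s1 * s2 * s3 + g3 s1 + g3 s2 + g3 s3 ≤ g3 m)
    (hgattain : ∀ m, 3 ≤ m → ∃ s1 s2 s3 : ℕ, 0 < s1 ∧ 0 < s2 ∧ 0 < s3 ∧
      s1 + s2 + s3 = m ∧ g3 m = s1 * s2 * s3 + g3 s1 + g3 s2 + g3 s3)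
    (χ : Fin n → Fin n → ℕ) (hχ : IsTripartiteColoring n χ)
    (hmax : ∀ χ' : Fin n → Fin n → ℕ, IsTripartiteColoring n χ' →
      (monoTriangles n χ').ncard ≤ (monoTriangles n χ).ncard)
    (hbig : ∃ χ' : Fin n → Fin n → ℕ, IsTripartiteColoring n χ' ∧
      g3 n + 1 ≤ (monoTriangles n χ').ncard)
    (hprev : ∀ χ' : Fin (n - 1) → Fin (n - 1) → ℕ, IsTripartiteColoring (n - 1) χ' →
      (monoTriangles (n - 1) χ').ncard ≤ g3 (n - 1)) :
    ∀ v : Fin n,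
      g3 n + 1 ≤ g3 (n - 1) + Set.ncard {s | s ∈ monoTriangles n χ ∧ v ∈ s} ∧
      g3 n + 1 ≤ g3 (n - 1) +
        ∑ c ∈ (Finset.univ.erase v).image (fun u => χ v u),
          bip (colorCount n χ v c) := by
  intro v
  classical
  obtain ⟨χ'', hχ'', hb⟩ := hbig
  have hAll : g3 n + 1 ≤ (monoTriangles n χ).ncard := hb.trans (hmax χ'' hχ'')
  by_cases hn3 : n < 3
  · exfalso
    have hempty : monoTriangles n χ = ∅ := by
      rw [Set.eq_empty_iff_forall_notMem]
      rintro s ⟨x, y, z, hxy, hxz, hyz, -, -⟩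
      have h1 : (x : ℕ) < n := x.isLt
      have h2 : (y : ℕ) < n := y.isLt
      have h3 : (z : ℕ) < n := z.isLt
      have e1 : (x : ℕ) ≠ y := fun h => hxy (Fin.ext h)
      have e2 : (x : ℕ) ≠ z := fun h => hxz (Fin.ext h)
      have e3 : (y : ℕ) ≠ z := fun h => hyz (Fin.ext h)
      omega
    rw [hempty, Set.ncard_empty, hg0 n hn3] at hAll
    omega
  · push_neg at hn3
    obtain ⟨m, rfl⟩ : ∃ m, n = m + 1 := ⟨n - 1, by omega⟩
    have hm : 0 < m := by omega
    obtain ⟨χ', hχ', hle⟩ := restrict_coloring m hm χ hχ v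
    have hBle : Set.ncard {s | s ∈ monoTriangles (m+1) χ ∧ v ∉ s} ≤ g3 (m + 1 - 1) :=
      hle.trans (hprev χ' hχ')
    have hsplit : monoTriangles (m+1) χ =
        {s | s ∈ monoTriangles (m+1) χ ∧ v ∈ s} ∪
        {s | s ∈ monoTriangles (m+1) χ ∧ v ∉ s} := by
      ext s
      simp only [Set.mem_union, Set.mem_setOf_eq]
      by_cases hv : v ∈ s <;> tauto
    have hsum : (monoTriangles (m+1) χ).ncard ≤
        Set.ncard {s | s ∈ monoTriangles (m+1) χ ∧ v ∈ s} +
        Set.ncard {s | s ∈ monoTriangles (m+1) χ ∧ v ∉ s} := by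
      conv_lhs => rw [hsplit]
      exact Set.ncard_union_le _ _
    have hbipbd := triangles_at_vertex_le (m+1) χ hχ v
    constructor
    · omega
    · omega
end

section
/- Suppose there exists an edge coloring of K_n with all color classes tripartite having at least m monochromatic triangles. Then there exists such a coloring with at least m monochromatic triangles in which every vertex has at most one color appearing on exactly one of its incident edges. -/
/-- Total weight of a coloring: the sum of all colors. -/
def wsum (n : ℕ) (χ : Fin n → Fin n → ℕ) : ℕ :=
  ∑ p : Fin n × Fin n, χ p.1 p.2

lemma fin3_third : ∀ a b : Fin 3, ∃ c : Fin 3, c ≠ a ∧ c ≠ b := by decide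

lemma recolor (n : ℕ) (χ : Fin n → Fin n → ℕ) (hχ : IsTripartiteColoring n χ)
    (v : Fin n) (c1 c2 : ℕ) (hlt : c1 < c2)
    (h1 : colorCount n χ v c1 = 1) (h2 : colorCount n χ v c2 = 1) :
    ∃ χ' : Fin n → Fin n → ℕ, IsTripartiteColoring n χ' ∧
      monoTriangles n χ ⊆ monoTriangles n χ' ∧ wsum n χ' < wsum n χ := by
  obtain ⟨hsym, hpart⟩ := hχ
  rw [colorCount, Finset.card_eq_one] at h1 h2
  obtain ⟨u, hu⟩ := h2
  obtain ⟨w, hw⟩ := h1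
  have humem : u ≠ v ∧ χ v u = c2 := by
    have : u ∈ Finset.univ.filter fun x => x ≠ v ∧ χ v x = c2 := by
      rw [hu]; exact Finset.mem_singleton_self u
    simpa using this
  have hwmem : w ≠ v ∧ χ v w = c1 := by
    have : w ∈ Finset.univ.filter fun x => x ≠ v ∧ χ v x = c1 := by
      rw [hw]; exact Finset.mem_singleton_self w
    simpa using this
  obtain ⟨huv, hu2⟩ := humem
  obtain ⟨hwv, hw1⟩ := hwmem
  have huniq : ∀ x : Fin n, x ≠ v → χ v x = c2 → x = u := by
    intro x hxv hxc
    have : x ∈ Finset.univ.filter fun y => y ≠ v ∧ χ v y = c2 := by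
      simp [hxv, hxc]
    rw [hu] at this; simpa using this
  have hwuniq : ∀ x : Fin n, x ≠ v → χ v x = c1 → x = w := by
    intro x hxv hxc
    have : x ∈ Finset.univ.filter fun y => y ≠ v ∧ χ v y = c1 := by
      simp [hxv, hxc]
    rw [hw] at this; simpa using this
  set χ' : Fin n → Fin n → ℕ := fun a b =>
    if (a = v ∧ b = u) ∨ (a = u ∧ b = v) then c1 else χ a b with hχ'def
  have hch : ∀ a b, ((a = v ∧ b = u) ∨ (a = u ∧ b = v)) → χ' a b = c1 := by
    intro a b h; simp only [hχ'def]; rw [if_pos h]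
  have hunch : ∀ a b, ¬((a = v ∧ b = u) ∨ (a = u ∧ b = v)) → χ' a b = χ a b := by
    intro a b h; simp only [hχ'def]; rw [if_neg h]
  have hsym' : ∀ i j, χ' i j = χ' j i := by
    intro i j
    simp only [hχ'def]
    by_cases h : (i = v ∧ j = u) ∨ (i = u ∧ j = v)
    · rw [if_pos h, if_pos (by tauto)]
    · rw [if_neg h, if_neg (by tauto), hsym]
  refine ⟨χ', ⟨hsym', ?_⟩, ?_, ?_⟩
  · -- tripartite
    intro c
    by_cases hc : c = c1
    · obtain ⟨p, hp⟩ := hpart c1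
      obtain ⟨a, hau, haw⟩ := fin3_third (p u) (p w)
      refine ⟨fun x => if x = v then a else p x, ?_⟩
      intro i j hij hcol
      rw [hc] at hcol
      by_cases hiv : i = v
      · rw [hiv] at hcol hij ⊢
        have hjv : j ≠ v := Ne.symm hij
        simp only [hjv, if_pos, if_neg, ite_true, ite_false]
        simp [hjv]
        by_cases hju : j = u
        · rw [hju]; exact hau
        · have hx : χ v j = c1 := by
            rw [← hcol]
            exact (hunch v j (by rintro (⟨-, h⟩ | ⟨h, -⟩); exacts [hju h, huv h.symm])).symm
          have hjw := hwuniq j hjv hx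
          rw [hjw]; exact haw
      · by_cases hjv : j = v
        · rw [hjv] at hcol hij ⊢
          simp [hiv]
          by_cases hiu : i = u
          · rw [hiu]; exact Ne.symm hau
          · have hx : χ v i = c1 := by
              rw [← hsym, ← hcol]
              exact (hunch i v (by rintro (⟨-, h⟩ | ⟨h, -⟩); exacts [huv h.symm, hiu h])).symm
            have hiw := hwuniq i hiv hx
            rw [hiw]; exact Ne.symm haw
        · simp only [if_neg hiv, if_neg hjv]
          simp [hiv, hjv]
          refine hp i j hij ?_
          rw [← hcol]
          exact (hunch i j (by rintro (⟨h, -⟩ | ⟨-, h⟩); exacts [hiv h, hjv h])).symm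
    · obtain ⟨p, hp⟩ := hpart c
      refine ⟨p, fun i j hij hcol => hp i j hij ?_⟩
      by_cases h : (i = v ∧ j = u) ∨ (i = u ∧ j = v)
      · exact absurd (hcol ▸ hch i j h : c = c1).symm (fun e => hc e.symm)
      · rw [← hcol]; exact (hunch i j h).symm
  · -- triangles preserved
    intro s hs
    obtain ⟨x, y, z, hxy, hxz, hyz, hseq, e1, e2⟩ := hs
    have key : ∀ a b c : Fin n, a ≠ b → a ≠ c → b ≠ c →
        χ a b = χ a c → χ a b = χ b c → χ' a b = χ a b := by
      intro a b c hab hac hbc f1 f2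
      by_cases h : (a = v ∧ b = u) ∨ (a = u ∧ b = v)
      · exfalso
        rcases h with ⟨ha, hb⟩ | ⟨ha, hb⟩
        · rw [ha, hb] at f1
          have : c = u := huniq c (fun e => hac (ha.trans e.symm)) (by rw [← f1, hu2])
          exact hbc (hb.trans this.symm)
        · rw [ha, hb] at f2
          have : c = u := huniq c (fun e => hbc (hb.trans e.symm))
            (by rw [← f2, hsym u v, hu2])
          exact hac (ha.trans this.symm)
      · exact hunch a b h
    have k1 : χ' x y = χ x y := key x y z hxy hxz hyz (e1.trans e2) e1
    have k2 : χ' y z = χ y z := by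
      refine key y z x hyz (Ne.symm hxy) (Ne.symm hxz) ?_ ?_
      · rw [hsym y x, ← e1]
      · rw [hsym z x, ← e2]
    have k3 : χ' x z = χ x z := by
      refine key x z y hxz hxy (Ne.symm hyz) ?_ ?_
      · exact (e1.trans e2).symm
      · rw [hsym z y]; exact e2.symm
    exact ⟨x, y, z, hxy, hxz, hyz, hseq, by rw [k1, k2, e1], by rw [k2, k3, e2]⟩
  · -- weight decreases
    unfold wsum
    refine Finset.sum_lt_sum ?_ ⟨(v, u), Finset.mem_univ _, ?_⟩
    · intro p _
      by_cases h : (p.1 = v ∧ p.2 = u) ∨ (p.1 = u ∧ p.2 = v)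
      · rw [hch p.1 p.2 h]
        rcases h with ⟨h1', h2'⟩ | ⟨h1', h2'⟩
        · rw [h1', h2', hu2]; exact le_of_lt hlt
        · rw [h1', h2', hsym, hu2]; exact le_of_lt hlt
      · rw [hunch p.1 p.2 h]
    · rw [hch v u (Or.inl ⟨rfl, rfl⟩)]
      simpa [hu2] using hlt

lemma main_aux (n m : ℕ) : ∀ k : ℕ, ∀ χ : Fin n → Fin n → ℕ, wsum n χ < k →
    IsTripartiteColoring n χ → m ≤ (monoTriangles n χ).ncard →
    ∃ χ' : Fin n → Fin n → ℕ, IsTripartiteColoring n χ' ∧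
      m ≤ (monoTriangles n χ').ncard ∧
      ∀ v : Fin n, ∀ c1 c2 : ℕ,
        colorCount n χ' v c1 = 1 → colorCount n χ' v c2 = 1 → c1 = c2 := by
  intro k
  induction k with
  | zero => intro χ hk; omega
  | succ k ih =>
    intro χ hk hχ hm
    by_cases hgood : ∀ v : Fin n, ∀ c1 c2 : ℕ,
        colorCount n χ v c1 = 1 → colorCount n χ v c2 = 1 → c1 = c2
    · exact ⟨χ, hχ, hm, hgood⟩
    · push_neg at hgood
      obtain ⟨v, c1, c2, hc1, hc2, hne⟩ := hgood
      rcases lt_trichotomy c1 c2 with hlt | heq | hgt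
      · obtain ⟨χ'', hχ'', hsub, hw⟩ := recolor n χ hχ v c1 c2 hlt hc1 hc2
        refine ih χ'' (by omega) hχ'' (hm.trans ?_)
        exact Set.ncard_le_ncard hsub (Set.toFinite _)
      · exact absurd heq hne
      · obtain ⟨χ'', hχ'', hsub, hw⟩ := recolor n χ hχ v c2 c1 hgt hc2 hc1
        refine ih χ'' (by omega) hχ'' (hm.trans ?_)
        exact Set.ncard_le_ncard hsub (Set.toFinite _)

/-- If some tripartite coloring of `K_n` has at least `m` monochromatic triangles, then there
is such a coloring in which every vertex has at most one color appearing on exactly one of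
its incident edges. -/
theorem stmt_15 (n m : ℕ)
    (h : ∃ χ : Fin n → Fin n → ℕ, IsTripartiteColoring n χ ∧
      m ≤ (monoTriangles n χ).ncard) :
    ∃ χ : Fin n → Fin n → ℕ, IsTripartiteColoring n χ ∧
      m ≤ (monoTriangles n χ).ncard ∧
      ∀ v : Fin n, ∀ c1 c2 : ℕ,
        colorCount n χ v c1 = 1 → colorCount n χ v c2 = 1 → c1 = c2 := by
  obtain ⟨χ, hχ, hm⟩ := h
  exact main_aux n m (wsum n χ + 1) χ (by omega) hχ hm
end

section
/- For all integers k ≥ 3 and n with k ≤ n ≤ k(k−1), any edge coloring of K_n whose color classes are all k-partite has at most g_k(n) monochromatic copies of K_k, where g_k(n) = ∏_{j=1}^k s_j for the balanced composition n = s_1 + ⋯ + s_k with each s_j ∈ {⌊n/k⌋, ⌈n/k⌉}. -/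
/-- `g_k(n)` for `n ≤ k(k−1)`: the balanced product `∏ s_j` with each
`s_j ∈ {⌊n/k⌋, ⌈n/k⌉}` summing to `n`. -/
def gkBal (k n : ℕ) : ℕ := (n / k) ^ (k - n % k) * (n / k + 1) ^ (n % k)

/-!
Induction on the vertex set `V`. If `V` carried more than `g_k(|V|)` monochromatic `k`-cliques,
then, as `V \ {v}` carries at most `g_k(|V| - 1)`, every vertex `v` would lie in more than
`g_k(|V|) - g_k(|V| - 1) = g_{k-1}(|V| - 1 - ⌊(|V| - 1)/k⌋)` of them. The cliques of colour `c`
through `v` are transversals of the other `k - 1` parts of the `c`-partition inside the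
`c`-neighbourhood of `v`, so there are at most `g_{k-1}(deg_c v)` of them, and this vanishes when
`deg_c v < k - 1`. Since `|V| ≤ k(k-1)`, shifted superadditivity of `g_{k-1}` rules out two such
colours at `v`: all cliques through `v` have one colour `d v`. The cliques of colour `c` are then
transversals of the `c`-partition of `{v | d v = c}`, and superadditivity of `g_k` bounds their total
number by `g_k(|V|)`. Transversals are counted by the discrete AM-GM inequality
`∏ |W_i| ≤ g_r(∑ |W_i|)`.
-/

open Finset

@[simp]
lemma gkBal_zero_left (m : ℕ) : gkBal 0 m = 1 := by
  simp [gkBal]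

lemma gkBal_eq_zero_of_lt {r m : ℕ} (h : m < r) : gkBal r m = 0 := by
  rw [gkBal, Nat.div_eq_of_lt h, Nat.mod_eq_of_lt h, zero_pow (by omega), zero_mul]

lemma gkBal_mul_add {r q s : ℕ} (hs : s < r) :
    gkBal r (r * q + s) = q ^ (r - s) * (q + 1) ^ s := by
  rw [gkBal, Nat.mul_add_div (by omega), Nat.div_eq_of_lt hs, Nat.mul_add_mod,
    Nat.mod_eq_of_lt hs, add_zero]

lemma gkBal_sub_div (r m : ℕ) :
    gkBal r (m - m / (r + 1)) =
      (m / (r + 1)) ^ (r - m % (r + 1)) * (m / (r + 1) + 1) ^ (m % (r + 1)) := by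
  have hm : (r + 1) * (m / (r + 1)) + m % (r + 1) = m := Nat.div_add_mod m (r + 1)
  have hs : m % (r + 1) < r + 1 := Nat.mod_lt _ (by omega)
  generalize m / (r + 1) = q, m % (r + 1) = s at hm hs ⊢
  subst hm
  rcases Nat.lt_or_ge s r with hsr | hsr
  · rw [show (r + 1) * q + s - q = r * q + s by rw [add_one_mul]; omega, gkBal_mul_add hsr]
  · obtain rfl : s = r := by omega
    rcases Nat.eq_zero_or_pos s with rfl | hr
    · simp
    · rw [show (s + 1) * q + s - q = s * (q + 1) + 0 by ring_nf; omega, gkBal_mul_add hr]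
      simp

/-- `⌊m / (r + 1)⌋` is a smallest part of the balanced composition of `m` into `r + 1` parts;
removing it leaves the balanced composition of the rest into `r` parts. -/
lemma gkBal_succ_left (r m : ℕ) :
    gkBal (r + 1) m = m / (r + 1) * gkBal r (m - m / (r + 1)) := by
  have hs : m % (r + 1) < r + 1 := Nat.mod_lt _ (by omega)
  rw [gkBal_sub_div, gkBal, show r + 1 - m % (r + 1) = r - m % (r + 1) + 1 by omega, pow_succ]
  ring

lemma gkBal_succ_succ (r m : ℕ) :
    gkBal (r + 1) (m + 1) = (m / (r + 1) + 1) * gkBal r (m - m / (r + 1)) := by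
  rw [gkBal_sub_div]
  have hm : (r + 1) * (m / (r + 1)) + m % (r + 1) = m := Nat.div_add_mod m (r + 1)
  have hs : m % (r + 1) < r + 1 := Nat.mod_lt _ (by omega)
  generalize m / (r + 1) = q, m % (r + 1) = s at hm hs ⊢
  subst hm
  rcases Nat.lt_or_ge s r with hsr | hsr
  · rw [add_assoc, gkBal_mul_add (by omega : s + 1 < r + 1),
      show r + 1 - (s + 1) = r - s by omega]
    ring
  · obtain rfl : s = r := by omega
    rw [show (s + 1) * q + s + 1 = (s + 1) * (q + 1) + 0 by ring, gkBal_mul_add (by omega)]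
    simp [pow_succ]
    ring

lemma gkBal_succ {r : ℕ} (hr : 0 < r) (m : ℕ) :
    gkBal r (m + 1) = gkBal r m + gkBal (r - 1) (m - m / r) := by
  obtain ⟨r, rfl⟩ := Nat.exists_eq_add_one_of_ne_zero hr.ne'
  rw [gkBal_succ_succ, gkBal_succ_left, Nat.add_sub_cancel]
  ring

lemma gkBal_monotone (r : ℕ) : Monotone (gkBal r) := by
  rcases Nat.eq_zero_or_pos r with rfl | hr
  · simp [Monotone]
  · exact monotone_nat_of_le_succ fun m => (gkBal_succ hr m).symm ▸ Nat.le_add_right _ _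

lemma monotone_sub_div (r : ℕ) : Monotone fun m => m - m / r :=
  monotone_nat_of_le_succ fun m => by
    have h₁ : (m + 1) / r ≤ m / r + 1 := by rw [Nat.succ_div]; split_ifs <;> omega
    have h₂ : m / r ≤ m := Nat.div_le_self m r
    have h₃ : m / r ≤ (m + 1) / r := Nat.div_le_div_right (Nat.le_succ m)
    omega

lemma gkBal_add_le_sub {r x y : ℕ} (hr : 0 < r) (hx : r - 1 ≤ x) (hy : r - 1 ≤ y) :
    gkBal r x + gkBal r y ≤ gkBal r (x + y - (r - 1)) := by
  induction y, hy using Nat.le_induction with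
  | base => rw [gkBal_eq_zero_of_lt (m := r - 1) (by omega), Nat.add_sub_cancel, add_zero]
  | succ y hy ih =>
    rw [gkBal_succ hr, show x + (y + 1) - (r - 1) = x + y - (r - 1) + 1 by omega, gkBal_succ hr]
    have : gkBal (r - 1) (y - y / r) ≤
        gkBal (r - 1) (x + y - (r - 1) - (x + y - (r - 1)) / r) :=
      gkBal_monotone (r - 1) (monotone_sub_div r (by omega : y ≤ x + y - (r - 1)))
    omega

lemma gkBal_add_le {r : ℕ} (hr : 0 < r) (x y : ℕ) : gkBal r x + gkBal r y ≤ gkBal r (x + y) := by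
  rcases Nat.lt_or_ge x r with hx | hx
  · simpa [gkBal_eq_zero_of_lt hx] using gkBal_monotone r (Nat.le_add_left y x)
  rcases Nat.lt_or_ge y r with hy | hy
  · simpa [gkBal_eq_zero_of_lt hy] using gkBal_monotone r (Nat.le_add_right x y)
  exact (gkBal_add_le_sub hr (by omega) (by omega)).trans (gkBal_monotone r (Nat.sub_le _ _))

lemma sum_gkBal_le {ι : Type*} {r : ℕ} (hr : 0 < r) (s : Finset ι) (e : ι → ℕ) :
    ∑ i ∈ s, gkBal r (e i) ≤ gkBal r (∑ i ∈ s, e i) := by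
  induction s using Finset.cons_induction with
  | empty => simp [gkBal_eq_zero_of_lt hr]
  | cons i s hi ih =>
    rw [sum_cons, sum_cons]
    exact (Nat.add_le_add_left ih _).trans (gkBal_add_le hr _ _)

lemma sum_gkBal_le_sub_of_ne {ι : Type*} [DecidableEq ι] {r : ℕ} (hr : 0 < r) {s : Finset ι}
    {e : ι → ℕ} {i j : ι} (hi : i ∈ s) (hj : j ∈ s) (hij : i ≠ j) (hei : r - 1 ≤ e i)
    (hej : r - 1 ≤ e j) : ∑ x ∈ s, gkBal r (e x) ≤ gkBal r (∑ x ∈ s, e x - (r - 1)) := by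
  have hrest : e j ≤ ∑ x ∈ s.erase i, e x := single_le_sum (fun _ _ => Nat.zero_le _)
    (mem_erase.2 ⟨hij.symm, hj⟩)
  rw [← add_sum_erase s _ hi, ← add_sum_erase s _ hi]
  exact (Nat.add_le_add_left (sum_gkBal_le hr _ e) _).trans
    (gkBal_add_le_sub hr hei (hej.trans hrest))

lemma mul_gkBal_le_succ_mul {r a S : ℕ} (h : (a + 1) * (r + 1) ≤ S) :
    a * gkBal r (S - a) ≤ (a + 1) * gkBal r (S - (a + 1)) := by
  rcases Nat.eq_zero_or_pos r with rfl | hr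
  · simp
  obtain ⟨r, rfl⟩ := Nat.exists_eq_add_one_of_ne_zero hr.ne'
  have h' : a * (r + 1) + (a + 1) ≤ S := by nlinarith
  have hq : a ≤ (S - (a + 1)) / (r + 1) := (Nat.le_div_iff_mul_le (by omega)).2 (by omega)
  rw [show S - a = S - (a + 1) + 1 by omega, gkBal_succ_succ, gkBal_succ_left, ← mul_assoc,
    ← mul_assoc]
  exact Nat.mul_le_mul_right _ (by nlinarith)

/-- `a ↦ a * gkBal r (S - a)` increases up to `a = S / (r + 1)`, where it equals
`gkBal (r + 1) S`. -/
lemma mul_gkBal_le (r : ℕ) {a S : ℕ} (h : a * (r + 1) ≤ S) :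
    a * gkBal r (S - a) ≤ gkBal (r + 1) S := by
  obtain ⟨d, hd⟩ := Nat.exists_eq_add_of_le ((Nat.le_div_iff_mul_le (by omega)).2 h)
  induction d generalizing a with
  | zero => rw [gkBal_succ_left, hd, add_zero]
  | succ d ih =>
    have h' : (a + 1) * (r + 1) ≤ S := (Nat.le_div_iff_mul_le (by omega)).1 (by omega)
    exact (mul_gkBal_le_succ_mul h').trans (ih h' (by omega))

theorem prod_le_gkBal {ι : Type*} (s : Finset ι) (t : ι → ℕ) :
    ∏ i ∈ s, t i ≤ gkBal #s (∑ i ∈ s, t i) := by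
  classical
  induction s using Finset.strongInduction with
  | H s ih =>
  rcases s.eq_empty_or_nonempty with rfl | hs
  · simp
  obtain ⟨i, hi, hmin⟩ := s.exists_min_image t hs
  have hcard : #(s.erase i) + 1 = #s := card_erase_add_one hi
  have hsum : t i + ∑ j ∈ s.erase i, t j = ∑ j ∈ s, t j := add_sum_erase s t hi
  have hle : t i * (#(s.erase i) + 1) ≤ ∑ j ∈ s, t j := by
    rw [hcard, mul_comm, ← smul_eq_mul]; exact card_nsmul_le_sum s t _ hmin
  calc ∏ j ∈ s, t j = t i * ∏ j ∈ s.erase i, t j := (mul_prod_erase s t hi).symm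
    _ ≤ t i * gkBal #(s.erase i) (∑ j ∈ s, t j - t i) := by
      rw [← hsum, Nat.add_sub_cancel_left]; exact Nat.mul_le_mul_left _ (ih _ (erase_ssubset hi))
    _ ≤ gkBal #s (∑ j ∈ s, t j) := hcard ▸ mul_gkBal_le _ hle

theorem card_le_gkBal_of_injOn {α ι : Type*} [DecidableEq α] {W : Finset α} {I : Finset ι}
    {p : α → ι} (hW : ∀ w ∈ W, p w ∈ I) {T : Finset (Finset α)}
    (hT : ∀ s ∈ T, s ⊆ W ∧ #s = #I ∧ Set.InjOn p s) : #T ≤ gkBal #I #W := by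
  classical
  have hsurj : Set.SurjOn (fun (f : ∀ i ∈ I, α) => I.attach.image fun i => f i.1 i.2)
      ↑(I.pi fun i => {w ∈ W | p w = i}) ↑T := by
    intro s hs
    obtain ⟨hsW, hcard, hinj⟩ := hT s hs
    have himage : s.image p = I :=
      eq_of_subset_of_card_le (image_subset_iff.2 fun x hx => hW x (hsW hx))
        (by rw [card_image_of_injOn hinj, hcard])
    have hpre : ∀ i ∈ I, ∃ x ∈ s, p x = i := fun i hi => mem_image.1 (himage ▸ hi)
    choose f hfs hfp using hpre
    refine ⟨f, mem_pi.2 fun i hi => mem_filter.2 ⟨hsW (hfs i hi), hfp i hi⟩, ?_⟩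
    ext x
    simp only [mem_image, mem_attach, true_and, Subtype.exists]
    constructor
    · rintro ⟨i, hi, rfl⟩
      exact hfs i hi
    · intro hx
      have hpx : p x ∈ I := hW x (hsW hx)
      exact ⟨p x, hpx, hinj (hfs _ hpx) hx (hfp _ hpx)⟩
  calc #T ≤ #(I.pi fun i => {w ∈ W | p w = i}) := card_le_card_of_surjOn _ hsurj
    _ = ∏ i ∈ I, #{w ∈ W | p w = i} := card_pi _ _
    _ ≤ gkBal #I (∑ i ∈ I, #{w ∈ W | p w = i}) := prod_le_gkBal _ _
    _ = gkBal #I #W := by rw [← card_eq_sum_card_fiberwise hW]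

lemma Set.Pairwise.injOn_of_ne {α ι : Type*} {χ : α → α → ℕ} {s : Set α} {c : ℕ} {p : α → ι}
    (hp : ∀ i j, i ≠ j → χ i j = c → p i ≠ p j) (hs : s.Pairwise fun x y => χ x y = c) :
    Set.InjOn p s :=
  fun x hx y hy hxy => by_contra fun hne => hp x y hne (hs hx hy hne) hxy

section MonoCliques

variable {α : Type*} [DecidableEq α] (χ : α → α → ℕ) (k : ℕ)

def monoCliques (c : ℕ) (V : Finset α) : Finset (Finset α) :=
  {s ∈ V.powersetCard k | (s : Set α).Pairwise fun x y => χ x y = c}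

variable {χ k}

lemma mem_monoCliques {c : ℕ} {V s : Finset α} :
    s ∈ monoCliques χ k c V ↔ s ⊆ V ∧ #s = k ∧ (s : Set α).Pairwise fun x y => χ x y = c := by
  simp [monoCliques, mem_powersetCard, and_assoc]

lemma filter_notMem_monoCliques (c : ℕ) (V : Finset α) (v : α) :
    {s ∈ monoCliques χ k c V | v ∉ s} = monoCliques χ k c (V.erase v) := by
  ext s
  simp only [mem_filter, mem_monoCliques, subset_erase]
  tauto

section Partite

variable {c : ℕ} {p : α → Fin k} (hp : ∀ i j, i ≠ j → χ i j = c → p i ≠ p j)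
include hp

lemma card_monoCliques_le (V : Finset α) : #(monoCliques χ k c V) ≤ gkBal k #V := by
  have := card_le_gkBal_of_injOn (I := univ) (p := p) (T := monoCliques χ k c V)
    (fun _ _ => mem_univ _) fun s hs => by
      obtain ⟨hsV, hcard, hs⟩ := mem_monoCliques.1 hs
      exact ⟨hsV, by rw [hcard, card_fin], hs.injOn_of_ne hp⟩
  rwa [card_fin] at this

lemma card_filter_mem_monoCliques_le (V : Finset α) (v : α) :
    #{s ∈ monoCliques χ k c V | v ∈ s} ≤ gkBal (k - 1) #{u ∈ V.erase v | χ v u = c} := by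
  have hinj : Set.InjOn (fun s : Finset α => s.erase v)
      ({s ∈ monoCliques χ k c V | v ∈ s} : Finset _) := by
    intro s hs t ht hst
    simp only [coe_filter, Set.mem_ofPred_eq] at hs ht
    rw [← insert_erase hs.2, ← insert_erase ht.2]
    exact congrArg _ hst
  rw [← card_image_of_injOn hinj]
  have hI : #(univ.erase (p v)) = k - 1 := by simp
  refine hI ▸ card_le_gkBal_of_injOn (I := univ.erase (p v)) (p := p) ?_ ?_
  · intro u hu
    obtain ⟨huv, -⟩ := mem_erase.1 (mem_filter.1 hu).1
    exact mem_erase.2 ⟨(hp v u (Ne.symm huv) (mem_filter.1 hu).2).symm, mem_univ _⟩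
  · simp only [mem_image, mem_filter]
    rintro _ ⟨s, ⟨hs, hvs⟩, rfl⟩
    obtain ⟨hsV, hcard, hs⟩ := mem_monoCliques.1 hs
    refine ⟨fun u hu => ?_, by rw [card_erase_of_mem hvs, hcard, hI], ?_⟩
    · obtain ⟨huv, hus⟩ := mem_erase.1 hu
      exact mem_filter.2 ⟨mem_erase.2 ⟨huv, hsV hus⟩, hs hvs hus (Ne.symm huv)⟩
    · exact (hs.mono (erase_subset v s)).injOn_of_ne hp

end Partite

lemma le_card_of_mem_monoCliques {c : ℕ} {V s : Finset α} {v : α} (hs : s ∈ monoCliques χ k c V)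
    (hv : v ∈ s) : k - 1 ≤ #{u ∈ V.erase v | χ v u = c} := by
  obtain ⟨hsV, hcard, hs⟩ := mem_monoCliques.1 hs
  rw [← hcard, ← card_erase_of_mem hv]
  refine card_le_card fun u hu => ?_
  obtain ⟨huv, hus⟩ := mem_erase.1 hu
  exact mem_filter.2 ⟨mem_erase.2 ⟨huv, hsV hus⟩, hs hv hus (Ne.symm huv)⟩

variable (hk : 2 ≤ k) (hpart : ∀ c, ∃ p : α → Fin k, ∀ i j, i ≠ j → χ i j = c → p i ≠ p j)
  (C : Finset ℕ)
include hk hpart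

lemma exists_dominant_color {V : Finset α} (hV : #V ≤ k * (k - 1)) {v : α} (hv : v ∈ V)
    (hmany : gkBal (k - 1) (#V - 1 - (#V - 1) / k) <
      ∑ c ∈ C, #{s ∈ monoCliques χ k c V | v ∈ s}) :
    ∃ d, ∀ c ∈ C, c ≠ d → ∀ s ∈ monoCliques χ k c V, v ∉ s := by
  by_contra! h
  obtain ⟨c₁, hc₁, -, s₁, hs₁, hvs₁⟩ := h 0
  obtain ⟨c₂, hc₂, hne, s₂, hs₂, hvs₂⟩ := h c₁
  have hdeg : ∑ c ∈ C, #{u ∈ V.erase v | χ v u = c} ≤ #V - 1 := by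
    rw [sum_card_fiberwise_eq_card_filter, ← card_erase_of_mem hv]
    exact card_filter_le _ _
  have hdiv : (#V - 1) / k ≤ k - 2 := by
    have : (#V - 1) / k < k - 1 := (Nat.div_lt_iff_lt_mul (by omega)).2
      ((Nat.sub_lt (card_pos.2 ⟨v, hv⟩) one_pos).trans_le (hV.trans_eq (mul_comm _ _)))
    omega
  refine hmany.not_ge ?_
  calc ∑ c ∈ C, #{s ∈ monoCliques χ k c V | v ∈ s}
      ≤ ∑ c ∈ C, gkBal (k - 1) #{u ∈ V.erase v | χ v u = c} := sum_le_sum fun c _ =>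
        (hpart c).elim fun _ hp => card_filter_mem_monoCliques_le hp V v
    _ ≤ gkBal (k - 1) (∑ c ∈ C, #{u ∈ V.erase v | χ v u = c} - (k - 1 - 1)) :=
        sum_gkBal_le_sub_of_ne (by omega) hc₂ hc₁ hne
          (by have := le_card_of_mem_monoCliques hs₂ hvs₂; omega)
          (by have := le_card_of_mem_monoCliques hs₁ hvs₁; omega)
    _ ≤ gkBal (k - 1) (#V - 1 - (#V - 1) / k) := gkBal_monotone _ (by omega)

theorem sum_card_monoCliques_le (V : Finset α) (hV : #V ≤ k * (k - 1)) :
    ∑ c ∈ C, #(monoCliques χ k c V) ≤ gkBal k #V := by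
  induction V using Finset.strongInduction with
  | H V ih =>
  by_contra! hlt
  have hmany : ∀ v ∈ V, gkBal (k - 1) (#V - 1 - (#V - 1) / k) <
      ∑ c ∈ C, #{s ∈ monoCliques χ k c V | v ∈ s} := by
    intro v hv
    have hcard : #(V.erase v) + 1 = #V := card_erase_add_one hv
    have hrest := ih _ (erase_ssubset hv) (by omega)
    simp only [← filter_notMem_monoCliques] at hrest
    have hsplit := sum_congr rfl fun c (_ : c ∈ C) =>
      (card_filter_add_card_filter_not (s := monoCliques χ k c V) (fun s => v ∈ s)).symm
    rw [sum_add_distrib] at hsplit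
    have hstep := gkBal_succ (r := k) (by omega) (#V - 1)
    rw [← card_erase_of_mem hv] at hstep ⊢
    rw [hcard] at hstep
    omega
  choose! d hd using fun v hv => exists_dominant_color hk hpart C hV hv (hmany v hv)
  refine hlt.not_ge ?_
  calc ∑ c ∈ C, #(monoCliques χ k c V)
      ≤ ∑ c ∈ C, gkBal k #{v ∈ V | d v = c} := sum_le_sum fun c hc => by
        obtain ⟨p, hp⟩ := hpart c
        refine (card_le_card fun s hs => ?_).trans (card_monoCliques_le hp _)
        obtain ⟨hsV, hrest⟩ := mem_monoCliques.1 hs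
        refine mem_monoCliques.2 ⟨fun x hx => mem_filter.2 ⟨hsV hx, ?_⟩, hrest⟩
        by_contra hne
        exact hd x (hsV hx) c hc (Ne.symm hne) s hs hx
    _ ≤ gkBal k (∑ c ∈ C, #{v ∈ V | d v = c}) := sum_gkBal_le (by omega) _ _
    _ ≤ gkBal k #V := gkBal_monotone _ (by
        rw [sum_card_fiberwise_eq_card_filter]; exact card_filter_le _ _)

end MonoCliques

theorem stmt_17_general (k n : ℕ) (hk : 3 ≤ k) (hn2 : n ≤ k * (k - 1))
    (χ : Fin n → Fin n → ℕ)
    (hpart : ∀ c : ℕ, ∃ p : Fin n → Fin k,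
      ∀ i j : Fin n, i ≠ j → χ i j = c → p i ≠ p j) :
    Set.ncard {s : Finset (Fin n) | s.card = k ∧
      ∃ c : ℕ, ∀ x ∈ s, ∀ y ∈ s, x ≠ y → χ x y = c} ≤ gkBal k n := by
  let C := (univ : Finset (Fin n × Fin n)).image fun e => χ e.1 e.2
  have hsub : {s : Finset (Fin n) | s.card = k ∧ ∃ c : ℕ, ∀ x ∈ s, ∀ y ∈ s, x ≠ y → χ x y = c} ⊆
      ↑(C.biUnion fun c => monoCliques χ k c univ) := by
    rintro s ⟨hcard, c, hc⟩
    obtain ⟨x, hx, y, hy, hxy⟩ := one_lt_card.1 (by omega : 1 < #s)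
    obtain rfl : c = χ x y := (hc x hx y hy hxy).symm
    exact mem_coe.2 (mem_biUnion.2 ⟨χ x y, mem_image_of_mem _ (mem_univ (x, y)),
      mem_monoCliques.2 ⟨subset_univ s, hcard, hc⟩⟩)
  calc _ ≤ #(C.biUnion fun c => monoCliques χ k c univ) :=
        (Set.ncard_le_ncard hsub (finite_toSet _)).trans_eq (Set.ncard_coe_finset _)
    _ ≤ ∑ c ∈ C, #(monoCliques χ k c univ) := card_biUnion_le
    _ ≤ gkBal k n := by
      simpa using sum_card_monoCliques_le (by omega) hpart C univ (by simpa using hn2)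

/-- For `3 ≤ k ≤ n ≤ k(k−1)`, any edge coloring of `K_n` whose color classes are all
`k`-partite has at most `g_k(n)` monochromatic copies of `K_k`. -/
theorem stmt_17 (k n : ℕ) (hk : 3 ≤ k) (hn1 : k ≤ n) (hn2 : n ≤ k * (k - 1))
    (χ : Fin n → Fin n → ℕ)
    (hsymm : ∀ i j, χ i j = χ j i)
    (hpart : ∀ c : ℕ, ∃ p : Fin n → Fin k,
      ∀ i j : Fin n, i ≠ j → χ i j = c → p i ≠ p j) :
    Set.ncard {s : Finset (Fin n) | s.card = k ∧
      ∃ c : ℕ, ∀ x ∈ s, ∀ y ∈ s, x ≠ y → χ x y = c} ≤ gkBal k n :=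
  stmt_17_general k n hk hn2 χ hpart
end

section
/- Let k ≥ 7. Define α = 1 − (1−1/k)^{k/(k−2)} (1 − k³/(2n²))^{2/(k−2)} and β = k³/(2n²) + (αk/(k−1))^{k/2} with n = k(k−1)+1, let γ > 0 solve e^{−2γ}(1+γ)² = 1−β, and suppose α, β ∈ (0,1). Then for k = 7 (where n = 43) the inequality α^{(k−2)/2} (k/(k−3))^{k−2} < e^{−2γ} holds; numerically α ≈ 0.2249, β ≈ 0.102, γ ≈ 0.3648, and α^{5/2}e³ ≈ 0.4817 < e^{−2γ} ≈ 0.4821. -/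
/-- If `q^n ≤ x^m` (all nonneg), then `q ≤ x^(m/n)`. -/
lemma le_rpow_div_aux (x q : ℝ) (m n : ℕ) (hn : (n:ℝ) ≠ 0) (hx : 0 ≤ x) (hq : 0 ≤ q)
    (h : q ^ n ≤ x ^ m) : q ≤ x ^ ((m : ℝ) / (n : ℝ)) := by
  have hx' : x ^ ((m : ℝ) / (n : ℝ)) = (x ^ m) ^ ((n : ℝ)⁻¹) := by
    rw [← Real.rpow_natCast x m, ← Real.rpow_mul hx, div_eq_mul_inv]
  have hq' : q = (q ^ n) ^ ((n : ℝ)⁻¹) := by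
    rw [← Real.rpow_natCast q n, ← Real.rpow_mul hq, mul_inv_cancel₀ hn, Real.rpow_one]
  rw [hx', hq']
  exact Real.rpow_le_rpow (pow_nonneg hq n) h (by positivity)

/-- If `x^m ≤ q^n` (all nonneg), then `x^(m/n) ≤ q`. -/
lemma rpow_div_le_aux (x q : ℝ) (m n : ℕ) (hn : (n:ℝ) ≠ 0) (hx : 0 ≤ x) (hq : 0 ≤ q)
    (h : x ^ m ≤ q ^ n) : x ^ ((m : ℝ) / (n : ℝ)) ≤ q := by
  have hx' : x ^ ((m : ℝ) / (n : ℝ)) = (x ^ m) ^ ((n : ℝ)⁻¹) := by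
    rw [← Real.rpow_natCast x m, ← Real.rpow_mul hx, div_eq_mul_inv]
  have hq' : q = (q ^ n) ^ ((n : ℝ)⁻¹) := by
    rw [← Real.rpow_natCast q n, ← Real.rpow_mul hq, mul_inv_cancel₀ hn, Real.rpow_one]
  rw [hx', hq']
  exact Real.rpow_le_rpow (pow_nonneg hx m) h (by positivity)

set_option maxHeartbeats 1000000 in
/-- Numerical verification for `k = 7`, `n = k(k−1)+1 = 43`: with
`α = 1 − (1−1/7)^{7/5}(1 − 343/3698)^{2/5}`, `β = 343/3698 + (7α/6)^{7/2}`, both in `(0,1)`,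
and `γ > 0` the solution of `e^{−2γ}(1+γ)² = 1−β`, we have
`α^{5/2} (7/4)^5 < e^{−2γ}`. -/
theorem stmt_18 (α β γ : ℝ)
    (hα : α = 1 - (1 - 1 / 7 : ℝ) ^ ((7 : ℝ) / 5) * (1 - 343 / 3698 : ℝ) ^ ((2 : ℝ) / 5))
    (hβ : β = 343 / 3698 + (α * 7 / 6) ^ ((7 : ℝ) / 2))
    (hα01 : 0 < α ∧ α < 1) (hβ01 : 0 < β ∧ β < 1)
    (hγpos : 0 < γ)
    (hγ : Real.exp (-2 * γ) * (1 + γ) ^ 2 = 1 - β) :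
    α ^ ((5 : ℝ) / 2) * (7 / 4 : ℝ) ^ 5 < Real.exp (-2 * γ) := by
  obtain ⟨hαpos, hα1⟩ := hα01
  -- Step 1: α ≤ 9/40
  have e75 : ((7 : ℝ) / 5) = ((7 : ℕ) : ℝ) / ((5 : ℕ) : ℝ) := by norm_num
  have e25 : ((2 : ℝ) / 5) = ((2 : ℕ) : ℝ) / ((5 : ℕ) : ℝ) := by norm_num
  have e72 : ((7 : ℝ) / 2) = ((7 : ℕ) : ℝ) / ((2 : ℕ) : ℝ) := by norm_num
  have e52 : ((5 : ℝ) / 2) = ((5 : ℕ) : ℝ) / ((2 : ℕ) : ℝ) := by norm_num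
  have hA : (8058 / 10000 : ℝ) ≤ (1 - 1 / 7 : ℝ) ^ ((7 : ℝ) / 5) := by
    rw [e75]
    exact le_rpow_div_aux _ _ 7 5 (by norm_num) (by norm_num) (by norm_num) (by norm_num)
  have hB : (9618 / 10000 : ℝ) ≤ (1 - 343 / 3698 : ℝ) ^ ((2 : ℝ) / 5) := by
    rw [e25]
    exact le_rpow_div_aux _ _ 2 5 (by norm_num) (by norm_num) (by norm_num) (by norm_num)
  have hAB : (31 / 40 : ℝ) ≤ (1 - 1 / 7 : ℝ) ^ ((7 : ℝ) / 5) * (1 - 343 / 3698 : ℝ) ^ ((2 : ℝ) / 5) := by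
    calc (31 / 40 : ℝ) ≤ (8058 / 10000) * (9618 / 10000) := by norm_num
    _ ≤ _ := by
      apply mul_le_mul hA hB (by norm_num)
      positivity
  have hαle : α ≤ 9 / 40 := by rw [hα]; linarith
  -- Step 2: β ≤ 343/3698 + 93/10000
  have hβle : β ≤ 343 / 3698 + 93 / 10000 := by
    rw [hβ]
    have h1 : (α * 7 / 6 : ℝ) ^ ((7 : ℝ) / 2) ≤ (21 / 80 : ℝ) ^ ((7 : ℝ) / 2) := by
      apply Real.rpow_le_rpow (by positivity) (by linarith) (by norm_num)
    have h2 : (21 / 80 : ℝ) ^ ((7 : ℝ) / 2) ≤ 93 / 10000 := by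
      rw [e72]
      exact rpow_div_le_aux _ _ 7 2 (by norm_num) (by norm_num) (by norm_num) (by norm_num)
    linarith
  -- Step 3: γ ≤ 2/5
  have hexp45 : (49 / 25 : ℝ) ≤ (1 - (343 / 3698 + 93 / 10000)) * Real.exp (4 / 5) := by
    have h1 : ((41 / 40 : ℝ)) ^ (32 : ℕ) ≤ Real.exp (4 / 5) := by
      have h2 : (41 / 40 : ℝ) ≤ Real.exp (1 / 40) := by
        have := Real.add_one_le_exp (1 / 40 : ℝ)
        linarith
      calc ((41 / 40 : ℝ)) ^ (32 : ℕ) ≤ (Real.exp (1 / 40)) ^ (32 : ℕ) :=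
            pow_le_pow_left₀ (by norm_num) h2 32
        _ = Real.exp (4 / 5) := by
            rw [← Real.exp_nat_mul]; norm_num
    nlinarith [h1]
  have hγle : γ ≤ 2 / 5 := by
    by_contra hc
    push_neg at hc
    set δ := γ - 2 / 5 with hδ
    have hδpos : 0 < δ := by simp [hδ]; linarith
    have h1 : 1 + γ ≤ (7 / 5) * Real.exp (5 * δ / 7) := by
      have := Real.add_one_le_exp (5 * δ / 7 : ℝ)
      nlinarith
    have h2 : Real.exp (-2 * γ) = Real.exp (-4 / 5) * Real.exp (-2 * δ) := by
      rw [← Real.exp_add]; congr 1; simp [hδ]; ring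
    have h3 : Real.exp (-2 * γ) * (1 + γ) ^ 2 ≤
        (49 / 25) * Real.exp (-4 / 5) * ((Real.exp (5 * δ / 7)) ^ 2 * Real.exp (-2 * δ)) := by
      rw [h2]
      have hγ1 : (0:ℝ) ≤ 1 + γ := by linarith
      have hsq : (1 + γ) ^ 2 ≤ (7 / 5 * Real.exp (5 * δ / 7)) ^ 2 :=
        pow_le_pow_left₀ hγ1 h1 2
      calc Real.exp (-4 / 5) * Real.exp (-2 * δ) * (1 + γ) ^ 2
          ≤ Real.exp (-4 / 5) * Real.exp (-2 * δ) * (7 / 5 * Real.exp (5 * δ / 7)) ^ 2 :=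
            mul_le_mul_of_nonneg_left hsq (by positivity)
        _ = _ := by ring
    have h4 : (Real.exp (5 * δ / 7)) ^ 2 * Real.exp (-2 * δ) = Real.exp (-4 * δ / 7) := by
      rw [← Real.exp_nat_mul, ← Real.exp_add]; congr 1; push_cast; ring
    have h5 : Real.exp (-4 * δ / 7) < 1 := by
      rw [Real.exp_lt_one_iff]
      linarith
    have h6 : Real.exp (-4 / 5) * (49 / 25) ≤ 1 - (343 / 3698 + 93 / 10000) := by
      have he : Real.exp (-4 / 5) * Real.exp (4 / 5) = 1 := by
        rw [← Real.exp_add]; norm_num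
      nlinarith [Real.exp_pos (-4/5 : ℝ)]
    rw [h4] at h3
    have h7 : Real.exp (-2 * γ) * (1 + γ) ^ 2 < 1 - (343 / 3698 + 93 / 10000) := by
      have h8 := mul_lt_mul_of_pos_left h5
        (show (0:ℝ) < 49 / 25 * Real.exp (-4 / 5) by positivity)
      rw [mul_one] at h8
      nlinarith [h3, h8, h6]
    rw [hγ] at h7
    linarith
  -- Step 4: lower bound on exp(-2γ)
  have hlow : (1 - (343 / 3698 + 93 / 10000)) * (25 / 49) ≤ Real.exp (-2 * γ) := by
    have h1 : (1 + γ) ^ 2 ≤ 49 / 25 := by nlinarith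
    nlinarith [Real.exp_pos (-2 * γ)]
  -- Step 5: upper bound on α^(5/2)
  have hup : α ^ ((5 : ℝ) / 2) ≤ 2404 / 100000 := by
    calc α ^ ((5 : ℝ) / 2) ≤ (9 / 40 : ℝ) ^ ((5 : ℝ) / 2) :=
          Real.rpow_le_rpow (le_of_lt hαpos) hαle (by norm_num)
      _ ≤ 2404 / 100000 := by
          rw [e52]
          exact rpow_div_le_aux _ _ 5 2 (by norm_num) (by norm_num) (by norm_num) (by norm_num)
  calc α ^ ((5 : ℝ) / 2) * (7 / 4 : ℝ) ^ 5 ≤ (2404 / 100000) * (7 / 4 : ℝ) ^ 5 := by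
        apply mul_le_mul_of_nonneg_right hup (by positivity)
    _ < (1 - (343 / 3698 + 93 / 10000)) * (25 / 49) := by norm_num
    _ ≤ Real.exp (-2 * γ) := hlow
end
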